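/- arXiv:math/0505039 — 5 statements merged into one kernel-verified Lean document; each statement's English description precedes it below -/
import Mathlib

section
/- Let π be a p-perturbation (p > 0) of a locally regular supercritical CA 𝒯, and suppose w_π is a function assigning to each unit vector u a number w_π(u) > 0 such that for every unit vector u and every ε > 0, starting the random dynamics from A₀ = H_u⁻ ∩ ℤ², the probability that (H_u⁻ + t(w_π(u) − ε)·u) ∩ ℤ² ∩ B(0, t²) ⊆ A_t and A_t ∩ B(0, t²) ⊆ H_u⁻ + t(w_π(u) + ε)·u tends to 1 as t → ∞. Then the function u ↦ w_π(u) is continuous on the unit circle. -/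
open MeasureTheory ProbabilityTheory Filter Topology Set
open scoped Pointwise ENNReal

noncomputable section

abbrev Pt : Type := EuclideanSpace ℝ (Fin 2)

def mkPt (a b : ℝ) : Pt := (WithLp.equiv 2 (Fin 2 → ℝ)).symm ![a, b]

def toPt (z : ℤ × ℤ) : Pt := mkPt z.1 z.2

def lattice : Set Pt := Set.range toPt

structure CA where
  N : Set Pt
  finite : N.Finite
  subLat : N ⊆ lattice
  zeroMem : (0 : Pt) ∈ N
  negN : -N = N
  rule : Set Pt → Prop
  mono : ∀ ⦃S₁ S₂ : Set Pt⦄, S₁ ⊆ S₂ → rule S₁ → rule S₂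
  notEmpty : ¬ rule ∅
  ruleSymm : ∀ S : Set Pt, rule (-S) ↔ rule S
  solid : ∀ S : Set Pt, (0 : Pt) ∈ S → rule S

def CA.T (c : CA) (A : Set Pt) : Set Pt :=
  {x | x ∈ lattice ∧ c.rule (((fun a => a - x) '' A) ∩ c.N)}

def CA.Tbar (c : CA) (B : Set Pt) : Set Pt :=
  {x | c.rule ((((fun a => a - x) '' B) ∩ lattice) ∩ c.N)}

def Hminus (u : Pt) : Set Pt := {x | (inner ℝ x u : ℝ) ≤ 0}

def shiftSet (v : Pt) (S : Set Pt) : Set Pt := (fun x => x + v) '' S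

def IsSpeed (c : CA) (w : Pt → ℝ) : Prop :=
  ∀ u : Pt, ‖u‖ = 1 → c.Tbar (Hminus u) = shiftSet (w u • u) (Hminus u)

def Supercritical (w : Pt → ℝ) : Prop := ∀ u : Pt, ‖u‖ = 1 → 0 < w u

def FillsSpace (c : CA) (A : Set Pt) : Prop :=
  A ⊆ lattice ∧ ∀ x ∈ lattice, ∃ t : ℕ, x ∈ c.T^[t] A

def LocallyRegular (c : CA) : Prop :=
  ∀ A₀ : Set Pt, A₀.Finite → A₀ ⊆ lattice → ∃ C : ℝ, 0 < C ∧
    ∀ A : ℕ → Set Pt, A 0 = A₀ →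
      (∀ s, A s ⊆ A (s + 1)) → (∀ s, A (s + 1) ⊆ A s ∪ c.T (A s)) →
      ∀ t : ℕ, ∀ x ∈ A t, (∀ y ∈ A₀, C ≤ dist x y) →
        ∃ G : Set Pt, G.Finite ∧ G ⊆ A t ∧ G ⊆ Metric.closedBall x C ∧ FillsSpace c G

structure Perturbation (c : CA) where
  pr : Set Pt → ℝ
  nonneg : ∀ S, 0 ≤ pr S
  le_one : ∀ S, pr S ≤ 1
  mono : ∀ ⦃S₁ S₂ : Set Pt⦄, S₁ ⊆ S₂ → pr S₁ ≤ pr S₂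
  empty : pr ∅ = 0
  prSymm : ∀ S, pr (-S) = pr S
  solid : ∀ S : Set Pt, (0 : Pt) ∈ S → pr S = 1
  p : ℝ
  p_pos : 0 < p
  p_min : ∀ S : Set Pt, S ⊆ c.N → 0 < pr S → p ≤ pr S
  p_attained : ∃ S : Set Pt, S ⊆ c.N ∧ pr S = p
  compat : ∀ S : Set Pt, S ⊆ c.N → (c.rule S ↔ 0 < pr S)

def IsUniformIID {Ω : Type*} [MeasureSpace Ω] (U : ((ℤ × ℤ) × ℕ) → Ω → ℝ) : Prop :=
  (∀ i, Measurable (U i)) ∧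
  iIndepFun U ℙ ∧
  ∀ i, Measure.map (U i) ℙ = volume.restrict (Set.Icc (0 : ℝ) 1)

def IsDyn {Ω : Type*} (c : CA) (P : Perturbation c) (U : ((ℤ × ℤ) × ℕ) → Ω → ℝ)
    (A : ℕ → Ω → Set Pt) : Prop :=
  ∀ ω t, A (t + 1) ω =
    {x | ∃ z : ℤ × ℤ, toPt z = x ∧
      U (z, t) ω ≤ P.pr (((fun a => a - x) '' A t ω) ∩ c.N)}

def IsStdDyn {Ω : Type*} (c : CA) (p : ℝ) (U : ((ℤ × ℤ) × ℕ) → Ω → ℝ)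
    (A : ℕ → Ω → Set Pt) : Prop :=
  ∀ ω t, A (t + 1) ω =
    A t ω ∪ {x | x ∈ c.T (A t ω) ∧ ∃ z : ℤ × ℤ, toPt z = x ∧ U (z, t) ω ≤ p}

def SpeedEvent (u : Pt) (wu ε : ℝ) (t : ℕ) (At : Set Pt) : Prop :=
  shiftSet (((t : ℝ) * (wu - ε)) • u) (Hminus u) ∩ lattice ∩
      Metric.closedBall 0 ((t : ℝ) ^ 2) ⊆ At ∧
  At ∩ Metric.closedBall 0 ((t : ℝ) ^ 2) ⊆
      shiftSet (((t : ℝ) * (wu + ε)) • u) (Hminus u)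

def Lset (w : Pt → ℝ) : Set Pt := {x | ∀ u : Pt, ‖u‖ = 1 → (inner ℝ x u : ℝ) ≤ w u}

def Kset (w : Pt → ℝ) : Set Pt :=
  {x | ∃ u : Pt, ‖u‖ = 1 ∧ ∃ r : ℝ, 0 ≤ r ∧ r ≤ (w u)⁻¹ ∧ x = r • u}

def dKp (w : Pt → ℝ) : Set Pt :=
  frontier (Kset w) ∩ frontier (convexHull ℝ (Kset w))

def lineu (w : Pt → ℝ) (u : Pt) : Set Pt := {x | (inner ℝ x u : ℝ) = -(w u)}

def rot (β : ℝ) (v : Pt) : Pt :=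
  mkPt (Real.cos β * v 0 - Real.sin β * v 1) (Real.sin β * v 0 + Real.cos β * v 1)

def lineSet (q n : Pt) : Set Pt := {x | (inner ℝ (x - q) n : ℝ) = 0}

def farOpen (Nset : Set Pt) (q n : Pt) : Set Pt :=
  {x ∈ Nset | 0 < (inner ℝ (x - q) n : ℝ) * (inner ℝ q n : ℝ)}

def farClosed (Nset : Set Pt) (q n : Pt) : Set Pt :=
  {x ∈ Nset | 0 ≤ (inner ℝ (x - q) n : ℝ) * (inner ℝ q n : ℝ)}

def HasLDSpeed (c : CA) (P : Perturbation c) (wpi : Pt → ℝ) : Prop :=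
  ∀ u : Pt, ‖u‖ = 1 → 0 < wpi u ∧
    ∀ (Ω : Type) [MeasureSpace Ω] [IsProbabilityMeasure (ℙ : Measure Ω)]
      (U : ((ℤ × ℤ) × ℕ) → Ω → ℝ), IsUniformIID U →
      ∀ A : ℕ → Ω → Set Pt, IsDyn c P U A → A 0 = (fun _ => Hminus u ∩ lattice) →
      ∀ ε : ℝ, 0 < ε → ∃ cε : ℝ, 0 < cε ∧ ∀ t : ℕ, 1 ≤ t →
        ENNReal.ofReal (1 - Real.exp (-cε * t)) ≤ ℙ {ω | SpeedEvent u (wpi u) ε t (A t ω)}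

def ext (M : ℤ) (κ : ℝ) (A : Set (ℤ × ℤ)) : Set (ℤ × ℤ) :=
  {q | (0 ≤ q.1 ∧ q.1 ≤ M - 1 ∧ q ∈ A) ∨
       (M ≤ q.1 ∧ q.1 ≤ 2 * M - 1 ∧ (q.1 - M, ⌊(q.2 : ℝ) - κ * M⌋) ∈ A) ∨
       (-M ≤ q.1 ∧ q.1 < 0 ∧ (q.1 + M, ⌊(q.2 : ℝ) + κ * M⌋) ∈ A)}

def IsStripDyn {Ω : Type*} (c : CA) (P : Perturbation c) (M : ℤ) (κ : ℝ)
    (U : ((ℤ × ℤ) × ℕ) → Ω → ℝ) (A : ℕ → Ω → Set (ℤ × ℤ)) : Prop :=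
  ∀ ω t, A (t + 1) ω =
    {q | 0 ≤ q.1 ∧ q.1 ≤ M - 1 ∧
      U (q, t) ω ≤ P.pr ((toPt '' ((fun r => r - q) '' ext M κ (A t ω))) ∩ c.N)}

def hgt1 (A : Set (ℤ × ℤ)) (M : ℤ) (κ : ℝ) : ℝ :=
  sSup {r : ℝ | ∃ q ∈ A, 0 ≤ q.1 ∧ q.1 ≤ M - 1 ∧ r = κ * q.1 + q.2}

def hgt0 (A : Set (ℤ × ℤ)) (M : ℤ) (κ : ℝ) : ℝ :=
  sInf {r : ℝ | ∃ q : ℤ × ℤ, q ∉ A ∧ 0 ≤ q.1 ∧ q.1 ≤ M - 1 ∧ r = κ * q.1 + q.2}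

def boxN (ρ : ℕ) : Finset (ℤ × ℤ) := Finset.Icc (-(ρ : ℤ), -(ρ : ℤ)) ((ρ : ℤ), (ρ : ℤ))

def cutCard (ρ : ℕ) (a b cc : ℝ) : ℕ :=
  ((boxN ρ).filter (fun y => cc ≤ a * y.1 + b * y.2)).card

def lamSet (ρ : ℕ) (x : ℤ × ℤ) : Set ℕ :=
  {n | ∃ a b cc : ℝ, ¬(a = 0 ∧ b = 0) ∧ 0 < cc ∧ a * x.1 + b * x.2 = cc ∧ n = cutCard ρ a b cc}

def lamStar (ρ : ℕ) (x : ℤ × ℤ) : ℕ := sInf (lamSet ρ x)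

open scoped Classical in
def IsSlowSurface {Ω : Type*} (b : ℤ × ℕ → Ω → Bool) (η : ℕ → Ω → ℤ → ℕ) : Prop :=
  (∀ ω x, η 0 ω x = 0) ∧
  ∀ ω t x, η (t + 1) ω x =
    if b (x, t) ω = true ∧ ∀ y : ℤ, |y - x| ≤ 1 → η t ω x ≤ η t ω y
    then η t ω x + 1 else η t ω x

open scoped Classical in
def IsFastSurface {Ω : Type*} (b : ℤ × ℕ → Ω → Bool) (η : ℕ → Ω → ℤ → ℕ) : Prop :=
  (∀ ω x, η 0 ω x = 0) ∧
  ∀ ω t x, η (t + 1) ω x =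
    if b (x, t) ω = true ∨ ∃ y : ℤ, |y - x| ≤ 1 ∧ η t ω x < η t ω y
    then η t ω x + 1 else η t ω x

def AdmissibleField {Ω : Type*} [MeasureSpace Ω] (p' : ℝ) (r : ℕ)
    (b : ℤ × ℕ → Ω → Bool) : Prop :=
  (∀ i, Measurable (b i)) ∧
  (∀ i, ℙ {ω | b i ω = true} = ENNReal.ofReal p') ∧
  ∀ I : Finset (ℤ × ℕ),
    (∀ i ∈ I, ∀ j ∈ I, i ≠ j → i.2 ≠ j.2 ∨ (r : ℤ) < |i.1 - j.1|) →
    iIndepFun (fun i : I => b i.1) ℙ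

/-!
The proof is a coupling. Write `θ = ‖u' - u‖`. Started from the lattice half-plane of `u`, the
perturbed dynamics at time `t` contains, with high probability, a lattice point `x` at height
`≈ t w_π(u)` in direction `u`. The rule has finite range `R`, so whether `x ∈ A_t` only depends on
`A₀` in the ball of radius `R t` around `x`, and there the half-plane of `u` lies below a lattice
translate `v + H_{u'}⁻` with `⟨v, u'⟩ = O(θ t)`. As the law of the noise is translation invariant,
`x - v` is then reached, with shifted noise, from the half-plane of `u'`, which with high
probability stays below height `t (w_π(u') + ε)`. Two events of probability `> 1/2` meet, so letting
`t → ∞` gives `w_π(u) - w_π(u') ≤ θ (2 |w_π(u)| + R)`; with the same bound for `u` and `u'`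
exchanged this makes `w_π` locally Lipschitz.
-/

lemma toPt_add (z z' : ℤ × ℤ) : toPt (z + z') = toPt z + toPt z' := by
  ext i
  fin_cases i <;> simp [toPt, mkPt]

lemma toPt_sub (z z' : ℤ × ℤ) : toPt (z - z') = toPt z - toPt z' := by
  rw [eq_sub_iff_add_eq, ← toPt_add, sub_add_cancel]

lemma sub_mem_lattice {x y : Pt} (hx : x ∈ lattice) (hy : y ∈ lattice) : x - y ∈ lattice := by
  obtain ⟨z, rfl⟩ := hx
  obtain ⟨z', rfl⟩ := hy
  exact ⟨z - z', toPt_sub z z'⟩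

lemma exists_toPt_dist_le_two (p : Pt) : ∃ z : ℤ × ℤ, ‖toPt z - p‖ ≤ 2 := by
  refine ⟨(⌊p 0⌋, ⌊p 1⌋), ?_⟩
  have hfloor : ∀ r : ℝ, ‖(⌊r⌋ : ℝ) - r‖ ^ 2 ≤ 1 := fun r => by
    rw [Real.norm_eq_abs, sq_abs, sq_le_one_iff_abs_le_one, abs_le]
    constructor <;> linarith [Int.floor_le r, Int.sub_one_lt_floor r]
  rw [EuclideanSpace.norm_eq, Real.sqrt_le_left (by norm_num), Fin.sum_univ_two]
  change ‖(⌊p 0⌋ : ℝ) - p 0‖ ^ 2 + ‖(⌊p 1⌋ : ℝ) - p 1‖ ^ 2 ≤ 2 ^ 2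
  linarith [hfloor (p 0), hfloor (p 1)]

lemma mem_shiftSet_iff {v x : Pt} {S : Set Pt} : x ∈ shiftSet v S ↔ x - v ∈ S := by
  constructor
  · rintro ⟨y, hy, rfl⟩
    simpa using hy
  · exact fun hx => ⟨x - v, hx, sub_add_cancel x v⟩

lemma mem_shiftSet_Hminus {u : Pt} (hu : ‖u‖ = 1) {r : ℝ} {x : Pt} :
    x ∈ shiftSet (r • u) (Hminus u) ↔ (inner ℝ x u : ℝ) ≤ r := by
  rw [mem_shiftSet_iff, Hminus, mem_ofPred_eq, inner_sub_left, real_inner_smul_left,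
    real_inner_self_eq_norm_sq, hu, one_pow, mul_one, sub_nonpos]

lemma abs_inner_left_sub_le {x y u : Pt} (hu : ‖u‖ = 1) :
    |(inner ℝ x u : ℝ) - inner ℝ y u| ≤ ‖x - y‖ := by
  simpa [← inner_sub_left, hu] using abs_real_inner_le_norm (x - y) u

lemma abs_inner_right_sub_le (x u u' : Pt) :
    |(inner ℝ x u' : ℝ) - inner ℝ x u| ≤ ‖x‖ * ‖u' - u‖ := by
  simpa [← inner_sub_right] using abs_real_inner_le_norm x (u' - u)

lemma mem_shiftSet_Hminus_inter_lattice {u u' v y : Pt} {ρ : ℝ} (hy : y ∈ Hminus u ∩ lattice)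
    (hv : v ∈ lattice) (hyρ : ‖y‖ ≤ ρ) (hvρ : ‖u' - u‖ * ρ ≤ inner ℝ v u') :
    y ∈ shiftSet v (Hminus u' ∩ lattice) := by
  refine mem_shiftSet_iff.2 ⟨?_, sub_mem_lattice hy.2 hv⟩
  have hyu : (inner ℝ y u : ℝ) ≤ 0 := hy.1
  have hyu' := (abs_le.1 (abs_inner_right_sub_le y u u')).2
  have := mul_le_mul_of_nonneg_right hyρ (norm_nonneg (u' - u))
  show (inner ℝ (y - v) u' : ℝ) ≤ 0
  rw [inner_sub_left]
  linarith

lemma exists_lattice_inner_near {u : Pt} (hu : ‖u‖ = 1) (s : ℝ) :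
    ∃ x ∈ lattice, |(inner ℝ x u : ℝ) - s| ≤ 2 ∧ ‖x‖ ≤ |s| + 2 := by
  obtain ⟨z, hz⟩ := exists_toPt_dist_le_two (s • u)
  refine ⟨toPt z, ⟨z, rfl⟩, ?_, ?_⟩
  · have h := abs_inner_left_sub_le (x := toPt z) (y := s • u) hu
    rw [real_inner_smul_left, real_inner_self_eq_norm_sq, hu, one_pow, mul_one] at h
    exact h.trans hz
  · calc ‖toPt z‖ ≤ ‖toPt z - s • u‖ + ‖s • u‖ := norm_le_norm_sub_add _ _
      _ ≤ 2 + |s| := by rw [norm_smul, hu, mul_one, Real.norm_eq_abs]; linarith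
      _ = |s| + 2 := add_comm _ _

lemma CA.nonneg_of_forall_norm_le (c : CA) {R : ℝ} (hN : ∀ n ∈ c.N, ‖n‖ ≤ R) : 0 ≤ R := by
  simpa using hN 0 c.zeroMem

lemma image_sub_inter_eq (N A : Set Pt) (x : Pt) :
    ((fun a => a - x) '' A) ∩ N = {n | n ∈ N ∧ x + n ∈ A} := by
  ext n
  constructor
  · rintro ⟨⟨a, ha, rfl⟩, hn⟩
    exact ⟨hn, by simpa using ha⟩
  · rintro ⟨hn, ha⟩
    exact ⟨⟨x + n, ha, add_sub_cancel_left x n⟩, hn⟩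

def noiseShift (z : ℤ × ℤ) : (ℤ × ℤ) × ℕ ≃ (ℤ × ℤ) × ℕ :=
  (Equiv.addRight z).prodCongr (Equiv.refl ℕ)

section Dynamics

variable (c : CA) (P : Perturbation c)

def perturbedDyn (η : (ℤ × ℤ) × ℕ → ℝ) (A₀ : Set Pt) : ℕ → Set Pt
  | 0 => A₀
  | t + 1 => {x | ∃ z : ℤ × ℤ, toPt z = x ∧
      η (z, t) ≤ P.pr (((fun a => a - x) '' perturbedDyn η A₀ t) ∩ c.N)}

lemma isDyn_perturbedDyn {Ω : Type*} (U : ((ℤ × ℤ) × ℕ) → Ω → ℝ) (A₀ : Set Pt) :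
    IsDyn c P U (fun t ω => perturbedDyn c P (fun i => U i ω) A₀ t) :=
  fun _ _ => rfl

lemma mem_perturbedDyn_of_local {R : ℝ} (hN : ∀ n ∈ c.N, ‖n‖ ≤ R) (η : (ℤ × ℤ) × ℕ → ℝ) :
    ∀ (t : ℕ) {x : Pt} {A₀ B₀ : Set Pt}, (∀ y ∈ A₀, dist y x ≤ R * t → y ∈ B₀) →
      x ∈ perturbedDyn c P η A₀ t → x ∈ perturbedDyn c P η B₀ t
  | 0, x, _, _, h, hx => h x hx (by simp)
  | t + 1, _, A₀, B₀, h, hx => by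
    obtain ⟨z, rfl, hz⟩ := hx
    refine ⟨z, rfl, hz.trans (P.mono ?_)⟩
    rw [image_sub_inter_eq, image_sub_inter_eq]
    refine fun n ⟨hn, hmem⟩ =>
      ⟨hn, mem_perturbedDyn_of_local hN η t (fun y hy hyx => h y hy ?_) hmem⟩
    calc dist y (toPt z) ≤ dist y (toPt z + n) + dist (toPt z + n) (toPt z) := dist_triangle _ _ _
      _ ≤ R * t + R := by
        rw [dist_self_add_left]
        exact add_le_add hyx (hN n hn)
      _ = R * ↑(t + 1) := by push_cast; ring

lemma perturbedDyn_shiftSet (η : (ℤ × ℤ) × ℕ → ℝ) (z : ℤ × ℤ) (A₀ : Set Pt) :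
    ∀ t, perturbedDyn c P η (shiftSet (toPt z) A₀) t =
      shiftSet (toPt z) (perturbedDyn c P (η ∘ noiseShift z) A₀ t)
  | 0 => rfl
  | t + 1 => by
    have hconf : ∀ x, ((fun a => a - x) '' perturbedDyn c P η (shiftSet (toPt z) A₀) t) ∩ c.N =
        ((fun a => a - (x - toPt z)) ''
          perturbedDyn c P (η ∘ noiseShift z) A₀ t) ∩ c.N := fun x => by
      rw [image_sub_inter_eq, image_sub_inter_eq, perturbedDyn_shiftSet η z A₀ t]
      simp only [mem_shiftSet_iff, sub_add_eq_add_sub]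
    ext x
    simp only [perturbedDyn, mem_shiftSet_iff, mem_ofPred_eq, hconf]
    constructor
    · rintro ⟨z', rfl, hz'⟩
      refine ⟨z' - z, toPt_sub z' z, ?_⟩
      simpa [noiseShift] using hz'
    · rintro ⟨z', hz', hle⟩
      exact ⟨z' + z, by rw [toPt_add, hz', sub_add_cancel], hle⟩

lemma measurable_mem_perturbedDyn (A₀ : Set Pt) :
    ∀ (t : ℕ) (x : Pt), Measurable (fun η : (ℤ × ℤ) × ℕ → ℝ => x ∈ perturbedDyn c P η A₀ t)
  | 0, _ => measurable_const
  | t + 1, x => by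
    have := c.finite.to_subtype
    have hconf : (fun η => P.pr (((fun a => a - x) '' perturbedDyn c P η A₀ t) ∩ c.N)) =
        (fun f : c.N → Prop => P.pr (Subtype.val '' {n | f n})) ∘
          (fun η (n : c.N) => x + n ∈ perturbedDyn c P η A₀ t) := by
      funext η
      rw [image_sub_inter_eq]
      congr 1
      ext n
      simp [and_comm]
    have hpr : Measurable (fun η => P.pr (((fun a => a - x) '' perturbedDyn c P η A₀ t) ∩ c.N)) :=
      hconf ▸ (measurable_of_finite _).comp
        (measurable_pi_lambda _ fun n => measurable_mem_perturbedDyn A₀ t (x + n))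
    exact Measurable.exists fun z => measurable_const.and
      (measurableSet_setOfPred.mp (measurableSet_le (measurable_pi_apply _) hpr))

lemma measurableSet_subset_perturbedDyn {K : Set Pt} (hK : K.Countable) (A₀ : Set Pt) (t : ℕ) :
    MeasurableSet {η : (ℤ × ℤ) × ℕ → ℝ | K ⊆ perturbedDyn c P η A₀ t} := by
  have hK' : {η : (ℤ × ℤ) × ℕ → ℝ | K ⊆ perturbedDyn c P η A₀ t} =
      ⋂ x ∈ K, {η | x ∈ perturbedDyn c P η A₀ t} := by
    ext η
    simp [subset_def]
  rw [hK']
  exact MeasurableSet.biInter hK fun x _ => (measurable_mem_perturbedDyn c P A₀ t x).setOf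

end Dynamics

abbrev Noise : Type := (ℤ × ℤ) × ℕ → ℝ

instance : IsProbabilityMeasure (volume.restrict (Icc (0 : ℝ) 1)) := ⟨by simp⟩

instance : MeasureSpace Noise := ⟨Measure.infinitePi fun _ => volume.restrict (Icc (0 : ℝ) 1)⟩

instance : IsProbabilityMeasure (ℙ : Measure Noise) :=
  inferInstanceAs (IsProbabilityMeasure (Measure.infinitePi _))

lemma isUniformIID_eval : IsUniformIID (fun i (η : Noise) => η i) :=
  ⟨measurable_pi_apply, iIndepFun_infinitePi (X := fun _ => id) fun _ => measurable_id,
    Measure.infinitePi_map_eval _⟩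

lemma volume_preimage_comp_equiv (e : (ℤ × ℤ) × ℕ ≃ (ℤ × ℤ) × ℕ) (S : Set Noise) :
    ℙ {η : Noise | η ∘ e ∈ S} = ℙ S := by
  have hmp : MeasurePreserving (MeasurableEquiv.piCongrLeft (fun _ => ℝ) e) ℙ ℙ :=
    ⟨MeasurableEquiv.measurable _,
      Measure.infinitePi_map_piCongrLeft (fun _ => volume.restrict (Icc (0 : ℝ) 1)) e⟩
  convert hmp.symm.measure_preimage_equiv S using 2
  ext η
  exact Iff.rfl

lemma exists_noiseShift_mul_le (c : CA) (P : Perturbation c) {R : ℝ}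
    (hN : ∀ n ∈ c.N, ‖n‖ ≤ R) {u u' : Pt} (hu : ‖u‖ = 1) (hu' : ‖u'‖ = 1) {a a' : ℝ} {t : ℕ} (ht : 3 * |a| + 2 * R + 16 ≤ t) :
    ∃ z : ℤ × ℤ, ∀ η : (ℤ × ℤ) × ℕ → ℝ,
      shiftSet (((t : ℝ) * a) • u) (Hminus u) ∩ lattice ∩ Metric.closedBall 0 ((t : ℝ) ^ 2) ⊆
          perturbedDyn c P η (Hminus u ∩ lattice) t →
      perturbedDyn c P (η ∘ noiseShift z) (Hminus u' ∩ lattice) t ∩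
          Metric.closedBall 0 ((t : ℝ) ^ 2) ⊆ shiftSet (((t : ℝ) * a') • u') (Hminus u') →
      t * (a - a' - ‖u' - u‖ * (2 * |a| + R)) ≤ 24 := by
  set θ := ‖u' - u‖
  have hθ : θ ≤ 2 := (norm_sub_le u' u).trans (by rw [hu, hu']; norm_num)
  have hR : 0 ≤ R := c.nonneg_of_forall_norm_le hN
  have ht0 : (0 : ℝ) ≤ t := t.cast_nonneg
  have hta : |(t : ℝ) * a - 2| ≤ t * |a| + 2 := by
    simpa [abs_mul, abs_of_nonneg ht0] using abs_sub ((t : ℝ) * a) 2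
  have htt : (t : ℝ) * (3 * |a| + 2 * R + 16) ≤ t ^ 2 := by
    rw [sq]; exact mul_le_mul_of_nonneg_left ht ht0
  have ha : 0 ≤ |a| := abs_nonneg a
  have hta0 : 0 ≤ (t : ℝ) * |a| := by positivity
  have htR : 0 ≤ (t : ℝ) * R := by positivity
  -- `x` lies just below height `t a` in direction `u`, and `ρ` bounds the norms in its light cone
  obtain ⟨x, hxL, hxu, hx⟩ := exists_lattice_inner_near hu ((t : ℝ) * a - 2)
  replace hx : ‖x‖ ≤ t * |a| + 4 := by linarith
  set ρ := t * (|a| + R) + 4 with hρdef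
  have hρ : 0 ≤ ρ := by positivity
  -- on the ball of radius `ρ`, `v + H_{u'}⁻` contains the half-plane of `u`
  obtain ⟨v, ⟨z, rfl⟩, hvu', hv⟩ := exists_lattice_inner_near hu' (θ * ρ + 2)
  refine ⟨z, fun η hlow hup => ?_⟩
  have hxA : x ∈ perturbedDyn c P η (Hminus u ∩ lattice) t := by
    refine hlow ⟨⟨(mem_shiftSet_Hminus hu).2 ?_, hxL⟩, mem_closedBall_zero_iff.2 ?_⟩
    · linarith [(abs_le.1 hxu).2]
    · linarith
  have hxA' : x - toPt z ∈ perturbedDyn c P (η ∘ noiseShift z) (Hminus u' ∩ lattice) t := by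
    rw [← mem_shiftSet_iff, ← perturbedDyn_shiftSet]
    refine mem_perturbedDyn_of_local c P hN η t (fun y hy hyx => ?_) hxA
    refine mem_shiftSet_Hminus_inter_lattice (ρ := ρ) hy ⟨z, rfl⟩ ?_
      (by linarith [(abs_le.1 hvu').1])
    linarith [norm_le_norm_sub_add y x, dist_eq_norm y x]
  have hxv : ‖x - toPt z‖ ≤ (t : ℝ) ^ 2 := by
    have : θ * ρ ≤ 2 * ρ := mul_le_mul_of_nonneg_right hθ hρ
    have := norm_sub_le x (toPt z)
    rw [abs_of_nonneg (by positivity)] at hv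
    linarith
  have hup' := (mem_shiftSet_Hminus hu').1 (hup ⟨hxA', mem_closedBall_zero_iff.2 hxv⟩)
  rw [inner_sub_left] at hup'
  have hxu' := (abs_le.1 (abs_inner_right_sub_le x u u')).1
  have : ‖x‖ * θ ≤ (t * |a| + 4) * θ := mul_le_mul_of_nonneg_right (by linarith) (norm_nonneg _)
  linarith [(abs_le.1 hxu).1, (abs_le.1 hvu').2]

lemma nonpos_of_eventually_natCast_mul_le {a K : ℝ}
    (h : ∀ᶠ t : ℕ in atTop, (t : ℝ) * a ≤ K) : a ≤ 0 := by
  by_contra! ha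
  obtain ⟨t, ht, ht'⟩ :=
    (h.and ((tendsto_natCast_atTop_atTop.atTop_mul_const ha).eventually_gt_atTop K)).exists
  linarith

lemma continuousOn_of_sub_le_dist_mul {X : Type*} [PseudoMetricSpace X] {f : X → ℝ} {s : Set X}
    {R : ℝ} (hR : 0 ≤ R) (h : ∀ x ∈ s, ∀ y ∈ s, f x - f y ≤ dist y x * (2 * |f x| + R)) :
    ContinuousOn f s := by
  intro x hx
  rw [ContinuousWithinAt, tendsto_iff_dist_tendsto_zero]
  set K := 2 * |f x| + R
  have hK : 0 ≤ K := by positivity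
  refine squeeze_zero' (Eventually.of_forall fun _ => dist_nonneg) ?_
    (g := fun y => 2 * K * dist y x) ?_
  · filter_upwards [self_mem_nhdsWithin,
      nhdsWithin_le_nhds (Metric.ball_mem_nhds x (by norm_num : (0 : ℝ) < 1 / 4))] with y hy hyx
    have hd := Metric.mem_ball.1 hyx
    have hxy := h x hx y hy
    have hyx' := h y hy x hx
    have hfy : |f y| ≤ |f x| + |f y - f x| := by
      simpa using abs_add_le (f x) (f y - f x)
    rw [dist_comm x y] at hyx'
    have hd0 : 0 ≤ dist y x := dist_nonneg
    rw [Real.dist_eq, abs_le]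
    constructor
    · nlinarith
    · rcases le_or_gt (f y - f x) 0 with hD | hD
      · nlinarith
      · rw [abs_of_pos hD] at hfy
        nlinarith
  · have hcont : Continuous fun y => dist y x := continuous_id.dist continuous_const
    simpa using ((hcont.tendsto x).const_mul (2 * K)).mono_left nhdsWithin_le_nhds

def HasSpeedInProbability (c : CA) (P : Perturbation c) (wpi : Pt → ℝ) : Prop :=
  ∀ u : Pt, ‖u‖ = 1 →
    ∀ (Ω : Type) [MeasureSpace Ω] [IsProbabilityMeasure (ℙ : Measure Ω)]
      (U : ((ℤ × ℤ) × ℕ) → Ω → ℝ), IsUniformIID U →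
      ∀ A : ℕ → Ω → Set Pt, IsDyn c P U A →
        A 0 = (fun _ => Hminus u ∩ lattice) →
      ∀ ε : ℝ, 0 < ε →
        Tendsto (fun t : ℕ => ℙ {ω | SpeedEvent u (wpi u) ε t (A t ω)})
          atTop (nhds 1)

lemma HasSpeedInProbability.eventually_natCast_mul_le {c : CA} {P : Perturbation c}
    {wpi : Pt → ℝ} (hspeed : HasSpeedInProbability c P wpi) {R : ℝ} (hN : ∀ n ∈ c.N, ‖n‖ ≤ R)
    {u u' : Pt} (hu : ‖u‖ = 1) (hu' : ‖u'‖ = 1) {ε : ℝ} (hε : 0 < ε) :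
    ∀ᶠ t : ℕ in atTop,
      (t : ℝ) * ((wpi u - ε) - (wpi u' + ε) - ‖u' - u‖ * (2 * |wpi u - ε| + R)) ≤ 24 := by
  have hlikely : ∀ u : Pt, ‖u‖ = 1 → ∀ᶠ t : ℕ in atTop, 1 / 2 <
      ℙ {η : Noise | SpeedEvent u (wpi u) ε t (perturbedDyn c P η (Hminus u ∩ lattice) t)} :=
    fun u hu => (hspeed u hu Noise _ isUniformIID_eval
      (fun t η => perturbedDyn c P η (Hminus u ∩ lattice) t) (isDyn_perturbedDyn c P _ _) rfl
      ε hε).eventually (lt_mem_nhds (ENNReal.half_lt_self one_ne_zero ENNReal.one_ne_top))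
  filter_upwards [hlikely u hu, hlikely u' hu',
    tendsto_natCast_atTop_atTop.eventually_ge_atTop (3 * |wpi u - ε| + 2 * R + 16)]
    with t hE hF ht
  obtain ⟨z, hz⟩ := exists_noiseShift_mul_le c P hN hu hu' (a' := wpi u' + ε) ht
  -- only `E` has to be measurable, and it is determined by countably many lattice points
  set E := {η : Noise | shiftSet (((t : ℝ) * (wpi u - ε)) • u) (Hminus u) ∩ lattice ∩
    Metric.closedBall 0 ((t : ℝ) ^ 2) ⊆ perturbedDyn c P η (Hminus u ∩ lattice) t}
  set G := {η : Noise | perturbedDyn c P η (Hminus u' ∩ lattice) t ∩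
    Metric.closedBall 0 ((t : ℝ) ^ 2) ⊆ shiftSet (((t : ℝ) * (wpi u' + ε)) • u') (Hminus u')}
  have hEG : ℙ (univ : Set Noise) < ℙ E + ℙ {η : Noise | η ∘ noiseShift z ∈ G} := by
    rw [measure_univ, volume_preimage_comp_equiv, ← ENNReal.add_halves 1]
    exact ENNReal.add_lt_add (hE.trans_le (measure_mono fun η h => h.1))
      (hF.trans_le (measure_mono fun η h => h.2))
  have hEmeas : MeasurableSet E := measurableSet_subset_perturbedDyn c P
    ((countable_range toPt).mono (inter_subset_left.trans inter_subset_right)) _ t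
  obtain ⟨η, hηE, hηG⟩ :=
    nonempty_inter_of_measure_lt_add' ℙ hEmeas (subset_univ _) (subset_univ _) hEG
  exact hz η hηE hηG

lemma HasSpeedInProbability.sub_le {c : CA} {P : Perturbation c} {wpi : Pt → ℝ}
    (hspeed : HasSpeedInProbability c P wpi) {R : ℝ} (hN : ∀ n ∈ c.N, ‖n‖ ≤ R) {u u' : Pt}
    (hu : ‖u‖ = 1) (hu' : ‖u'‖ = 1) :
    wpi u - wpi u' ≤ ‖u' - u‖ * (2 * |wpi u| + R) := by
  have hθ : ‖u' - u‖ ≤ 2 := (norm_sub_le u' u).trans (by rw [hu, hu']; norm_num)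
  refine le_of_forall_pos_le_add fun δ hδ => ?_
  have hε : 0 < δ / 6 := by positivity
  have hlim := nonpos_of_eventually_natCast_mul_le
    (hspeed.eventually_natCast_mul_le hN hu hu' hε)
  have habs : |wpi u - δ / 6| ≤ |wpi u| + δ / 6 := by
    simpa [abs_of_pos hε] using abs_sub (wpi u) (δ / 6)
  have h1 := mul_le_mul_of_nonneg_left habs (norm_nonneg (u' - u))
  have h2 := mul_le_mul_of_nonneg_right hθ hε.le
  linarith

theorem stmt11_general (c : CA) (P : Perturbation c)
    (wpi : Pt → ℝ)
    (hspeed : ∀ u : Pt, ‖u‖ = 1 →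
      ∀ (Ω : Type) [MeasureSpace Ω] [IsProbabilityMeasure (ℙ : Measure Ω)]
        (U : ((ℤ × ℤ) × ℕ) → Ω → ℝ), IsUniformIID U →
        ∀ A : ℕ → Ω → Set Pt, IsDyn c P U A →
          A 0 = (fun _ => Hminus u ∩ lattice) →
        ∀ ε : ℝ, 0 < ε →
          Tendsto (fun t : ℕ => ℙ {ω | SpeedEvent u (wpi u) ε t (A t ω)})
            atTop (nhds 1)) :
    ContinuousOn wpi (Metric.sphere (0 : Pt) 1) := by
  obtain ⟨R, hN⟩ := c.finite.isBounded.exists_norm_le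
  refine continuousOn_of_sub_le_dist_mul (c.nonneg_of_forall_norm_le hN) fun u hu u' hu' => ?_
  rw [dist_eq_norm]
  exact HasSpeedInProbability.sub_le hspeed hN (mem_sphere_zero_iff_norm.1 hu)
    (mem_sphere_zero_iff_norm.1 hu')

theorem stmt11 (c : CA) (w : Pt → ℝ) (hw : IsSpeed c w) (hsc : Supercritical w)
    (hlr : LocallyRegular c) (P : Perturbation c)
    (wpi : Pt → ℝ) (hpos : ∀ u : Pt, ‖u‖ = 1 → 0 < wpi u)
    (hspeed : ∀ u : Pt, ‖u‖ = 1 →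
      ∀ (Ω : Type) [MeasureSpace Ω] [IsProbabilityMeasure (ℙ : Measure Ω)]
        (U : ((ℤ × ℤ) × ℕ) → Ω → ℝ), IsUniformIID U →
        ∀ A : ℕ → Ω → Set Pt, IsDyn c P U A →
          A 0 = (fun _ => Hminus u ∩ lattice) →
        ∀ ε : ℝ, 0 < ε →
          Tendsto (fun t : ℕ => ℙ {ω | SpeedEvent u (wpi u) ε t (A t ω)})
            atTop (nhds 1)) :
    ContinuousOn wpi (Metric.sphere (0 : Pt) 1) :=
  stmt11_general c P wpi hspeed

end
end

section
/- Let 𝒯 be a supercritical CA and let u be a unit vector. The following are equivalent: (1) there exist a line ℓ₀ ⊂ ℝ² through the point u/w(u) and δ > 0 such that ℓ₀ ∩ B(u/w(u), δ) ⊆ K_{1/w}; (2) there exist a point x_u ∈ ℓ_u ∩ 𝒩 and α > 0 such that every line ℓ obtained from ℓ_u by a rotation about x_u through a nonzero angle of absolute value less than α satisfies π_d(ℒ°(ℓ)) = 0. -/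
open MeasureTheory ProbabilityTheory Filter Topology Set
open scoped Pointwise ENNReal

noncomputable section

/-!
Write `v_β = rot β u`. Since `w v` is the largest `h` with `π_d((-h v + H_v⁻) ∩ 𝒩) = 1` and `𝒩` is
finite, for `a ∈ ℓ_u` and small `β` the line through `a` rotated by `β` has `π_d(ℒ°) = 0` exactly
when `w v_β ≤ -⟪a, v_β⟫`; and a point `r v` (`r > 0`, `‖v‖ = 1`) of the polar line
`{x | ⟪x, a⟫ = -1}` lies in `K_{1/w}` exactly when `w v ≤ 1 / r = -⟪a, v⟫`. So both conditions say
that some `a ∈ ℓ_u` satisfies `w v_β ≤ -⟪a, v_β⟫` for all small `β`: in (1) `a` is the pole of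
`ℓ₀`, in (2) `a ∈ 𝒩`. A pole `a` can be replaced by the point of `ℓ_u ∩ 𝒩` closest to it, since
for small `β` the points of `𝒩` below the line rotated about that point are also below the line
rotated about `a`.
-/

open scoped RealInnerProductSpace

@[simp] lemma mkPt_apply_zero (a b : ℝ) : mkPt a b 0 = a := rfl

@[simp] lemma mkPt_apply_one (a b : ℝ) : mkPt a b 1 = b := rfl

lemma Pt.ext {x y : Pt} (h0 : x 0 = y 0) (h1 : x 1 = y 1) : x = y := by
  ext i; fin_cases i <;> assumption

lemma Pt.inner_eq (x y : Pt) : ⟪x, y⟫ = x 0 * y 0 + x 1 * y 1 := by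
  simp [PiLp.inner_apply, Fin.sum_univ_two, mul_comm]

lemma Pt.norm_eq_one_iff (x : Pt) : ‖x‖ = 1 ↔ x 0 ^ 2 + x 1 ^ 2 = 1 := by
  rw [← pow_eq_one_iff_of_nonneg (norm_nonneg x) two_ne_zero, ← real_inner_self_eq_norm_sq,
    Pt.inner_eq]
  ring_nf

def perp (v : Pt) : Pt := mkPt (-(v 1)) (v 0)

lemma rot_eq (β : ℝ) (v : Pt) : rot β v = Real.cos β • v + Real.sin β • perp v := by
  apply Pt.ext <;> simp only [rot, perp, mkPt_apply_zero, mkPt_apply_one, PiLp.add_apply,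
    PiLp.smul_apply, smul_eq_mul] <;> ring

lemma rot_zero (v : Pt) : rot 0 v = v := by
  simp [rot_eq]

lemma inner_rot (y : Pt) (β : ℝ) (v : Pt) :
    ⟪y, rot β v⟫ = Real.cos β * ⟪y, v⟫ + Real.sin β * ⟪y, perp v⟫ := by
  rw [rot_eq, inner_add_right, real_inner_smul_right, real_inner_smul_right]

lemma norm_rot {v : Pt} (hv : ‖v‖ = 1) (β : ℝ) : ‖rot β v‖ = 1 := by
  rw [Pt.norm_eq_one_iff] at hv ⊢
  simp only [rot, mkPt_apply_zero, mkPt_apply_one]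
  linear_combination hv + (v 0 ^ 2 + v 1 ^ 2) * Real.sin_sq_add_cos_sq β

lemma continuous_rot (v : Pt) : Continuous fun β => rot β v := by
  simp only [rot_eq]
  fun_prop

lemma tendsto_inner_rot (y u : Pt) :
    Tendsto (fun β => ⟪y, rot β u⟫) (𝓝 0) (𝓝 ⟪y, u⟫) := by
  simpa only [rot_zero] using (continuous_const.inner (continuous_rot u)).tendsto (0 : ℝ)

lemma exists_rot_eq {u v : Pt} (hu : ‖u‖ = 1) (hv : ‖v‖ = 1) :
    ∃ β, |β| = Real.arccos ⟪v, u⟫ ∧ rot β u = v := by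
  set c₀ := ⟪v, u⟫
  set s₀ := ⟪v, perp u⟫
  rw [Pt.norm_eq_one_iff] at hu hv
  have hc₀ : c₀ = v 0 * u 0 + v 1 * u 1 := Pt.inner_eq v u
  have hs₀ : s₀ = v 1 * u 0 - v 0 * u 1 := by
    simp only [s₀, Pt.inner_eq, perp, mkPt_apply_zero, mkPt_apply_one]; ring
  have hcs : s₀ ^ 2 = 1 - c₀ ^ 2 := by
    rw [hc₀, hs₀]; linear_combination (u 0 ^ 2 + u 1 ^ 2) * hv + hu
  have hc₀_mem : c₀ ∈ Set.Icc (-1 : ℝ) 1 := by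
    rw [Set.mem_Icc, ← abs_le, ← sq_le_one_iff_abs_le_one]; nlinarith [sq_nonneg s₀]
  have hsin : Real.sin (Real.arccos c₀) = |s₀| := by
    rw [Real.sin_arccos, ← hcs, Real.sqrt_sq_eq_abs]
  have hcos : Real.cos (Real.arccos c₀) = c₀ := Real.cos_arccos hc₀_mem.1 hc₀_mem.2
  have key : ∀ β, Real.cos β = c₀ → Real.sin β = s₀ → rot β u = v := by
    intro β hc hs
    apply Pt.ext <;> simp only [rot, mkPt_apply_zero, mkPt_apply_one, hc, hs, hc₀, hs₀]
    · linear_combination v 0 * hu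
    · linear_combination v 1 * hu
  rcases le_or_gt 0 s₀ with hs | hs
  · refine ⟨Real.arccos c₀, abs_of_nonneg (Real.arccos_nonneg _), key _ hcos ?_⟩
    rw [hsin, abs_of_nonneg hs]
  · refine ⟨-Real.arccos c₀, by rw [abs_neg, abs_of_nonneg (Real.arccos_nonneg _)],
      key _ (by rw [Real.cos_neg, hcos]) ?_⟩
    rw [Real.sin_neg, hsin, abs_of_neg hs, neg_neg]

section Speed

variable {c : CA} {w : Pt → ℝ}

lemma smul_mem_Tbar_Hminus_iff {v : Pt} (hv : ‖v‖ = 1) (h : ℝ) :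
    h • v ∈ c.Tbar (Hminus v) ↔ c.rule {y ∈ c.N | ⟪y, v⟫ ≤ -h} := by
  have hvv : ⟪v, v⟫ = 1 := by rw [real_inner_self_eq_norm_sq, hv, one_pow]
  suffices (fun a => a - h • v) '' Hminus v ∩ lattice ∩ c.N = {y ∈ c.N | ⟪y, v⟫ ≤ -h} by
    rw [CA.Tbar, Set.mem_ofPred_eq, this]
  ext y
  simp only [Hminus, Set.mem_inter_iff, Set.mem_image, Set.mem_ofPred_eq]
  constructor
  · rintro ⟨⟨⟨a, ha, rfl⟩, -⟩, hN⟩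
    refine ⟨hN, ?_⟩
    rw [inner_sub_left, real_inner_smul_left, hvv]
    linarith
  · rintro ⟨hN, hy⟩
    refine ⟨⟨⟨y + h • v, ?_, add_sub_cancel_right y _⟩, c.subLat hN⟩, hN⟩
    rw [inner_add_left, real_inner_smul_left, hvv]
    linarith

lemma smul_mem_shiftSet_Hminus_iff {v : Pt} (hv : ‖v‖ = 1) (h t : ℝ) :
    h • v ∈ shiftSet (t • v) (Hminus v) ↔ h ≤ t := by
  have hvv : ⟪v, v⟫ = 1 := by rw [real_inner_self_eq_norm_sq, hv, one_pow]
  simp only [shiftSet, Hminus, Set.mem_image, Set.mem_ofPred_eq]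
  constructor
  · rintro ⟨a, ha, hav⟩
    rw [eq_sub_of_add_eq hav, ← sub_smul, real_inner_smul_left, hvv] at ha
    linarith
  · intro hle
    refine ⟨(h - t) • v, ?_, by rw [← add_smul, sub_add_cancel]⟩
    rw [real_inner_smul_left, hvv]
    linarith

lemma rule_inner_le_iff (hw : IsSpeed c w) {v : Pt} (hv : ‖v‖ = 1) (t : ℝ) :
    c.rule {y ∈ c.N | ⟪y, v⟫ ≤ t} ↔ -t ≤ w v := by
  rw [← smul_mem_shiftSet_Hminus_iff hv, ← hw v hv, smul_mem_Tbar_Hminus_iff hv, neg_neg]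

lemma rule_inner_lt_iff (hw : IsSpeed c w) {v : Pt} (hv : ‖v‖ = 1) (t : ℝ) :
    c.rule {y ∈ c.N | ⟪y, v⟫ < t} ↔ -t < w v := by
  constructor
  · intro hrule
    set S := {y ∈ c.N | ⟪y, v⟫ < t}
    have hS : S.Nonempty := Set.nonempty_iff_ne_empty.2 fun h => c.notEmpty (h ▸ hrule)
    -- `c.N` is finite, so the strict half-plane is a closed one with a lower threshold
    obtain ⟨m, ⟨hmN, hmt⟩, hmax⟩ :=
      S.exists_max_image (⟪·, v⟫) (c.finite.subset fun _ hy => hy.1) hS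
    have hSm : S = {y ∈ c.N | ⟪y, v⟫ ≤ ⟪m, v⟫} :=
      Set.ext fun y => ⟨fun hy => ⟨hy.1, hmax y hy⟩, fun hy => ⟨hy.1, hy.2.trans_lt hmt⟩⟩
    rw [hSm, rule_inner_le_iff hw hv] at hrule
    linarith
  · intro hlt
    refine c.mono (fun y hy => ⟨hy.1, hy.2.trans_lt (neg_lt.1 hlt)⟩)
      ((rule_inner_le_iff hw hv (-w v)).2 (neg_neg (w v)).le)

lemma lineu_inter_N_nonempty (hw : IsSpeed c w) {v : Pt} (hv : ‖v‖ = 1) :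
    (lineu w v ∩ c.N).Nonempty := by
  by_contra hempty
  have hrule := (rule_inner_le_iff hw hv (-w v)).2 (neg_neg (w v)).le
  have hlt : {y ∈ c.N | ⟪y, v⟫ ≤ -w v} = {y ∈ c.N | ⟪y, v⟫ < -w v} :=
    Set.ext fun y => ⟨fun hy => ⟨hy.1, hy.2.lt_of_ne fun h => hempty ⟨y, h, hy.1⟩⟩,
      fun hy => ⟨hy.1, hy.2.le⟩⟩
  rw [hlt, rule_inner_lt_iff hw hv, neg_neg] at hrule
  exact hrule.false

lemma farOpen_eq_of_inner_neg {S : Set Pt} {q n : Pt} (hq : ⟪q, n⟫ < 0) :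
    farOpen S q n = {x ∈ S | ⟪x, n⟫ < ⟪q, n⟫} := by
  ext x
  simp only [farOpen, Set.mem_ofPred_eq]
  rw [← neg_mul_neg, mul_pos_iff_of_pos_right (neg_pos.2 hq), neg_pos, inner_sub_left, sub_neg]

lemma rule_farOpen_iff (hw : IsSpeed c w) {q n : Pt} (hn : ‖n‖ = 1) (hq : ⟪q, n⟫ < 0) :
    c.rule (farOpen c.N q n) ↔ -⟪q, n⟫ < w n := by
  rw [farOpen_eq_of_inner_neg hq, rule_inner_lt_iff hw hn]

end Speed

lemma smul_mem_Kset_iff {w : Pt → ℝ} {v : Pt} (hv : ‖v‖ = 1) (hwv : 0 < w v) {r : ℝ}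
    (hr : 0 < r) : r • v ∈ Kset w ↔ w v ≤ r⁻¹ := by
  rw [← le_inv_comm₀ hr hwv]
  constructor
  · rintro ⟨v', hv', s, hs0, hs, hrs⟩
    have hrs' : r = s := by
      simpa [norm_smul, hv, hv', abs_of_pos hr, abs_of_nonneg hs0] using congrArg norm hrs
    subst hrs'
    rwa [smul_right_injective Pt hr.ne' hrs]
  · exact fun h => ⟨v, hv, r, hr.le, h, rfl⟩

lemma mul_lt_mul_of_abs_sub_le_abs_sub {s p q r : ℝ} (hqr : |q - r| ≤ |p - r|)
    (hpq : s * p < s * q) : s * p < s * r := by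
  by_contra! hrp
  have hp : |s * (p - r)| = s * (p - r) := abs_of_nonneg (by linarith)
  have hq : |s * (q - r)| = s * (q - r) := abs_of_pos (by linarith)
  have := mul_le_mul_of_nonneg_left hqr (abs_nonneg s)
  rw [← abs_mul, ← abs_mul, hp, hq] at this
  linarith

/-- The polar line `{x | ⟪x, a⟫ = -1}` of `a` lies in `Kset w` in all directions close to `u`
(see `smul_mem_Kset_iff`). -/
def IsLocalSpeedBound (w : Pt → ℝ) (u a : Pt) : Prop :=
  ∀ᶠ β in 𝓝 (0 : ℝ), w (rot β u) ≤ -⟪a, rot β u⟫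

section LocalSpeedBound

variable {c : CA} {w : Pt → ℝ} {u a : Pt}

lemma isLocalSpeedBound_iff_not_rule_farOpen (hw : IsSpeed c w) (hu : ‖u‖ = 1) (hwu : 0 < w u)
    (ha : a ∈ lineu w u) :
    IsLocalSpeedBound w u a ↔
      ∃ α : ℝ, 0 < α ∧ ∀ β : ℝ, β ≠ 0 → |β| < α → ¬ c.rule (farOpen c.N a (rot β u)) := by
  have hneg : ∀ᶠ β in 𝓝 (0 : ℝ), ⟪a, rot β u⟫ < 0 :=
    (tendsto_inner_rot a u).eventually_lt_const (by rw [ha]; linarith)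
  have key : ∀ β, ⟪a, rot β u⟫ < 0 →
      (w (rot β u) ≤ -⟪a, rot β u⟫ ↔ ¬ c.rule (farOpen c.N a (rot β u))) := fun β hβ => by
    rw [rule_farOpen_iff hw (norm_rot hu β) hβ, not_lt]
  constructor
  · intro h
    obtain ⟨α, hα, hball⟩ := Metric.eventually_nhds_iff.1 (h.and hneg)
    refine ⟨α, hα, fun β _ hβ => ?_⟩
    obtain ⟨hbound, hβneg⟩ := hball (by rwa [Real.dist_0_eq_abs])
    exact (key β hβneg).1 hbound
  · rintro ⟨α, hα, hrule⟩
    filter_upwards [hneg, Metric.ball_mem_nhds 0 hα] with β hβ hball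
    rcases eq_or_ne β 0 with rfl | h0
    · rw [rot_zero, ha, neg_neg]
    · exact (key β hβ).2 (hrule β h0 (by rwa [Metric.mem_ball, Real.dist_0_eq_abs] at hball))

lemma IsLocalSpeedBound.exists_mem_lineu_inter_N (hw : IsSpeed c w) (hu : ‖u‖ = 1)
    (ha : a ∈ lineu w u) (h : IsLocalSpeedBound w u a) :
    ∃ x ∈ lineu w u ∩ c.N, IsLocalSpeedBound w u x := by
  obtain ⟨x, hx, hnearest⟩ := (lineu w u ∩ c.N).exists_min_image
    (fun y => |⟪y, perp u⟫ - ⟪a, perp u⟫|) (c.finite.subset Set.inter_subset_right)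
    (lineu_inter_N_nonempty hw hu)
  refine ⟨x, hx, ?_⟩
  have hbelow : ∀ᶠ β in 𝓝 (0 : ℝ), ∀ y ∈ c.N, ⟪y, u⟫ < ⟪a, u⟫ → ⟪y, rot β u⟫ < ⟪a, rot β u⟫ :=
    c.finite.eventually_all.2 fun y _ => eventually_imp_distrib_left.2
      ((tendsto_inner_rot y u).eventually_lt (tendsto_inner_rot a u))
  have habove : ∀ᶠ β in 𝓝 (0 : ℝ), ∀ y ∈ c.N, ⟪x, u⟫ < ⟪y, u⟫ → ⟪x, rot β u⟫ < ⟪y, rot β u⟫ :=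
    c.finite.eventually_all.2 fun y _ => eventually_imp_distrib_left.2
      ((tendsto_inner_rot x u).eventually_lt (tendsto_inner_rot y u))
  filter_upwards [h, hbelow, habove] with β hβ hbelow habove
  have hv := norm_rot hu β
  rw [← not_lt, ← rule_inner_lt_iff hw hv] at hβ ⊢
  refine fun hrule => hβ (c.mono (fun y hy => ⟨hy.1, ?_⟩) hrule)
  obtain ⟨hyN, hyx⟩ := hy
  have hline : ∀ z ∈ lineu w u,
      ⟪z, rot β u⟫ = Real.cos β * -w u + Real.sin β * ⟪z, perp u⟫ := fun z hz => by
    rw [inner_rot, hz]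
  rcases lt_trichotomy ⟪y, u⟫ (-w u) with hlt | heq | hgt
  · exact hbelow y hyN (by rwa [ha])
  · rw [hline y heq, hline x hx.1] at hyx
    rw [hline y heq, hline a ha, add_lt_add_iff_left]
    exact mul_lt_mul_of_abs_sub_le_abs_sub (hnearest y ⟨heq, hyN⟩) (by linarith)
  · exact absurd hyx (habove y hyN (by rwa [hx.1])).not_gt

lemma exists_isLocalSpeedBound_of_lineSet_inter_ball_subset_Kset (hsc : Supercritical w)
    (hu : ‖u‖ = 1) {n : Pt} {δ : ℝ} (hδ : 0 < δ)
    (h : lineSet ((w u)⁻¹ • u) n ∩ Metric.ball ((w u)⁻¹ • u) δ ⊆ Kset w) :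
    ∃ a ∈ lineu w u, IsLocalSpeedBound w u a := by
  have hwu := hsc u hu
  have hun : ⟪u, n⟫ ≠ 0 := by
    -- otherwise the line is radial and leaves `Kset w` right after `(w u)⁻¹ • u`
    intro h0
    have hmem : ((w u)⁻¹ + δ / 2) • u ∈ lineSet ((w u)⁻¹ • u) n ∩ Metric.ball ((w u)⁻¹ • u) δ := by
      refine ⟨?_, ?_⟩
      · rw [lineSet, Set.mem_ofPred_eq, ← sub_smul, real_inner_smul_left, h0, mul_zero]
      · rw [Metric.mem_ball, dist_eq_norm, ← sub_smul, norm_smul, hu, add_sub_cancel_left,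
          Real.norm_of_nonneg (by positivity)]
        linarith
    have hle := (smul_mem_Kset_iff hu hwu (by positivity)).1 (h hmem)
    have hlt : ((w u)⁻¹ + δ / 2)⁻¹ < w u := by
      rw [inv_lt_comm₀ (by positivity) hwu]
      linarith
    linarith
  set a := -(w u / ⟪u, n⟫) • n
  have hau : ⟪a, u⟫ = -w u := by
    rw [real_inner_smul_left, real_inner_comm u n, neg_mul, div_mul_cancel₀ _ hun]
  have hline : ∀ x, ⟪x, a⟫ = -1 → x ∈ lineSet ((w u)⁻¹ • u) n := fun x hx => by
    rw [real_inner_smul_right] at hx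
    rw [lineSet, Set.mem_ofPred_eq, inner_sub_left, real_inner_smul_left]
    field_simp at hx ⊢
    linarith
  refine ⟨a, hau, ?_⟩
  have hneg : ∀ᶠ β in 𝓝 (0 : ℝ), ⟪a, rot β u⟫ < 0 :=
    (tendsto_inner_rot a u).eventually_lt_const (by linarith)
  have htendsto : Tendsto (fun β => (-⟪a, rot β u⟫)⁻¹ • rot β u) (𝓝 0) (𝓝 ((w u)⁻¹ • u)) := by
    have := ((tendsto_inner_rot a u).neg.inv₀ (by rw [hau, neg_neg]; exact hwu.ne')).smul
      ((continuous_rot u).tendsto 0)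
    rwa [hau, neg_neg, rot_zero] at this
  filter_upwards [hneg, htendsto.eventually (Metric.ball_mem_nhds _ hδ)] with β hβ hball
  have hv := norm_rot hu β
  have hpos : 0 < (-⟪a, rot β u⟫)⁻¹ := inv_pos.2 (neg_pos.2 hβ)
  have hmem := h ⟨hline _ ?_, hball⟩
  · rwa [smul_mem_Kset_iff hv (hsc _ hv) hpos, inv_inv] at hmem
  · rw [real_inner_smul_left, real_inner_comm a, inv_mul_eq_div, div_neg, div_self hβ.ne]

lemma IsLocalSpeedBound.exists_lineSet_inter_ball_subset_Kset (hsc : Supercritical w)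
    (hu : ‖u‖ = 1) (ha : a ∈ lineu w u) (h : IsLocalSpeedBound w u a) :
    ∃ n : Pt, n ≠ 0 ∧ ∃ δ : ℝ, 0 < δ ∧
      lineSet ((w u)⁻¹ • u) n ∩ Metric.ball ((w u)⁻¹ • u) δ ⊆ Kset w := by
  have hwu := hsc u hu
  set q := (w u)⁻¹ • u
  have hqa : ⟪q, a⟫ = -1 := by
    rw [real_inner_smul_left, real_inner_comm, ha, mul_neg, inv_mul_cancel₀ hwu.ne']
  have hq : ‖q‖⁻¹ • q = u := by
    rw [norm_smul, hu, mul_one, Real.norm_of_nonneg (inv_nonneg.2 hwu.le), inv_inv, smul_smul,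
      mul_inv_cancel₀ hwu.ne', one_smul]
  obtain ⟨α, hα, hbound⟩ := Metric.eventually_nhds_iff.1 h
  -- directions of points near `q` are rotations of `u` by small angles
  have hangle : ∀ᶠ x in 𝓝 q, Real.arccos ⟪‖x‖⁻¹ • x, u⟫ < α := by
    have hcont : ContinuousAt (fun x : Pt => Real.arccos ⟪‖x‖⁻¹ • x, u⟫) q := by
      have hq0 : ‖q‖ ≠ 0 := fun h0 => by simp [norm_eq_zero.1 h0] at hqa
      exact Real.continuous_arccos.continuousAt.comp
        (((continuous_norm.continuousAt.inv₀ hq0).smul continuousAt_id).inner continuousAt_const)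
    refine hcont.eventually_lt continuousAt_const ?_
    show Real.arccos ⟪‖q‖⁻¹ • q, u⟫ < α
    rwa [hq, real_inner_self_eq_norm_sq, hu, one_pow, Real.arccos_one]
  obtain ⟨δ, hδ, hδb⟩ := Metric.eventually_nhds_iff.1 hangle
  refine ⟨a, ?_, δ, hδ, ?_⟩
  · rintro rfl
    rw [lineu, Set.mem_ofPred_eq, inner_zero_left] at ha
    linarith
  rintro x ⟨hx, hxb⟩
  have hxa : ⟪x, a⟫ = -1 := by
    rw [lineSet, Set.mem_ofPred_eq, inner_sub_left, hqa] at hx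
    linarith
  have hx0 : x ≠ 0 := by
    rintro rfl
    simp at hxa
  have hr : 0 < ‖x‖ := norm_pos_iff.2 hx0
  set v := ‖x‖⁻¹ • x
  have hv : ‖v‖ = 1 := norm_smul_inv_norm hx0
  obtain ⟨β, hβ, hrot⟩ := exists_rot_eq hu hv
  have hwv := hbound (show dist β 0 < α by rw [Real.dist_0_eq_abs, hβ]; exact hδb hxb)
  rw [hrot] at hwv
  rw [← smul_inv_smul₀ hr.ne' x, smul_mem_Kset_iff hv (hsc v hv) hr]
  calc w v ≤ -⟪a, v⟫ := hwv
    _ = ‖x‖⁻¹ := by rw [real_inner_smul_right, real_inner_comm x, hxa, mul_neg_one, neg_neg]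

end LocalSpeedBound

theorem stmt12 (c : CA) (w : Pt → ℝ) (hw : IsSpeed c w) (hsc : Supercritical w)
    (u : Pt) (hu : ‖u‖ = 1) :
    (∃ n : Pt, n ≠ 0 ∧ ∃ δ : ℝ, 0 < δ ∧
        lineSet ((w u)⁻¹ • u) n ∩ Metric.ball ((w u)⁻¹ • u) δ ⊆ Kset w) ↔
    (∃ xu ∈ lineu w u ∩ c.N, ∃ α : ℝ, 0 < α ∧
        ∀ β : ℝ, β ≠ 0 → |β| < α → ¬ c.rule (farOpen c.N xu (rot β u))) := by
  have hwu := hsc u hu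
  constructor
  · rintro ⟨n, -, δ, hδ, hsub⟩
    obtain ⟨a, ha, hbound⟩ :=
      exists_isLocalSpeedBound_of_lineSet_inter_ball_subset_Kset hsc hu hδ hsub
    obtain ⟨x, hx, hxbound⟩ := hbound.exists_mem_lineu_inter_N hw hu ha
    exact ⟨x, hx, (isLocalSpeedBound_iff_not_rule_farOpen hw hu hwu hx.1).1 hxbound⟩
  · rintro ⟨x, hx, hrule⟩
    exact ((isLocalSpeedBound_iff_not_rule_farOpen hw hu hwu hx.1).2 hrule
      ).exists_lineSet_inter_ball_subset_Kset hsc hu hx.1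

end
end

section
/- Consider the slow growth surface: heights η'_t : ℤ → ℕ with η'₀ ≡ 0 and η'_{t+1}(x) = η'_t(x) + 1 if b(x, t) = 1 and η'_t(y) ≥ η'_t(x) for all y with |y − x| ≤ 1, and η'_{t+1}(x) = η'_t(x) otherwise. Then: (1) for every p' > 0 and r ∈ ℕ there exist α > 0 and c > 0 such that for every admissible field b, every x ∈ ℤ and every t, P(η'_t(x) ≤ αt) ≤ e^{−ct}; (2) for every ε > 0 and r ∈ ℕ there exist p'₀ < 1 and c > 0 such that whenever p' ≥ p'₀, for every admissible field b, every x and t, P(η'_t(x) ≤ (1 − ε)t) ≤ e^{−ct}. -/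
open MeasureTheory ProbabilityTheory Filter Topology Set
open scoped Pointwise ENNReal

noncomputable section

/-!
Trace the site `(x, t)` backwards in time: at a closed site (`b = false`) stay put; at an open
site where the height grew, stay put; at an open site where it did not grow, step to a neighbour
of strictly lower height. Every step of the last two kinds accounts for one unit of `η t x`, so if
`η t x ≤ m` the path visits at least `t - m` closed sites, at distinct times and hence
independently. A union bound over the `4 ^ t` step sequences, weighting each non-closed step by
`θ⁻¹` and paying `θ ^ m` for them, gives `ℙ (η t x ≤ m) ≤ θ ^ m * (1 - p' + 3 / θ) ^ t`. This
decays exponentially when `θ` is large and either `m / t` is small (part 1) or `p'` is close to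
`1` (part 2).
-/

open Finset

/-- Steps of a backward path: `0` = stay at a closed site, `1` = stay where the height grew,
`2`, `3` = move to a neighbour. -/
def disp : Fin 4 → ℤ := ![0, 0, 1, -1]

def backPos (g : ℕ → Fin 4) (x : ℤ) (t s : ℕ) : ℤ := x - ∑ u ∈ Ico s t, disp (g u)

def IsFailureCert (β : ℤ × ℕ → Bool) (x : ℤ) (t : ℕ) (g : ℕ → Fin 4) : Prop :=
  ∀ s < t, g s = 0 → β (backPos g x t s, s) = false

def numSteps (g : ℕ → Fin 4) (t : ℕ) : ℕ := #{s ∈ range t | g s ≠ 0}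

lemma exists_disp_eq {x y : ℤ} (h : |y - x| ≤ 1) : ∃ v : Fin 4, v ≠ 0 ∧ x - disp v = y := by
  rcases abs_le.mp h with ⟨h₁, h₂⟩
  obtain hy | hy | hy : y = x ∨ y = x - 1 ∨ y = x + 1 := by omega
  · exact ⟨1, by decide, by simp [disp, hy]⟩
  · exact ⟨2, by decide, by simp [disp, hy]⟩
  · exact ⟨3, by decide, by simp [disp, hy]⟩

lemma backPos_update (g : ℕ → Fin 4) (x : ℤ) (v : Fin 4) {t s : ℕ} (hs : s ≤ t) :
    backPos (Function.update g t v) x (t + 1) s = backPos g (x - disp v) t s := by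
  have hsum : ∑ u ∈ Ico s t, disp (Function.update g t v u) = ∑ u ∈ Ico s t, disp (g u) :=
    sum_congr rfl fun u hu => by
      rw [Function.update_of_ne (mem_Ico.mp hu).2.ne]
  simp only [backPos, sum_Ico_succ_top hs, hsum, Function.update_self]
  ring

lemma numSteps_update (g : ℕ → Fin 4) (t : ℕ) (v : Fin 4) :
    numSteps (Function.update g t v) (t + 1) = numSteps g t + if v = 0 then 0 else 1 := by
  have hsum : ∑ s ∈ range t, (if Function.update g t v s ≠ 0 then 1 else 0)
      = ∑ s ∈ range t, (if g s ≠ 0 then 1 else 0) :=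
    sum_congr rfl fun s hs => by
      rw [Function.update_of_ne (mem_range.mp hs).ne]
  simp only [numSteps, card_filter, sum_range_succ, hsum, Function.update_self]
  split_ifs <;> simp_all

lemma IsFailureCert.update {β : ℤ × ℕ → Bool} {x : ℤ} {t : ℕ} {g : ℕ → Fin 4} {v : Fin 4}
    (hg : IsFailureCert β (x - disp v) t g) (hv : v = 0 → β (x, t) = false) :
    IsFailureCert β x (t + 1) (Function.update g t v) := by
  intro s hs hs0
  rcases (Nat.lt_succ_iff.mp hs).lt_or_eq with hst | rfl
  · rw [backPos_update g x v hst.le]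
    rw [Function.update_of_ne hst.ne] at hs0
    exact hg s hst hs0
  · rw [Function.update_self] at hs0
    simpa [backPos, hs0, disp] using hv hs0

lemma exists_isFailureCert_numSteps_le {β : ℤ × ℕ → Bool} {η : ℕ → ℤ → ℕ}
    (hmono : ∀ t x, η t x ≤ η (t + 1) x)
    (hgrow : ∀ t x, β (x, t) = true → ∃ y, |y - x| ≤ 1 ∧ η t y + 1 ≤ η (t + 1) x) (t : ℕ) (x : ℤ) :
    ∃ g, (∀ s, t ≤ s → g s = 0) ∧ IsFailureCert β x t g ∧ numSteps g t ≤ η t x := by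
  induction t generalizing x with
  | zero => exact ⟨0, fun _ _ => rfl, fun s hs => absurd hs s.not_lt_zero, by simp [numSteps]⟩
  | succ t ih =>
    have hvanish {g : ℕ → Fin 4} (hg : ∀ s, t ≤ s → g s = 0) (v : Fin 4) (s : ℕ)
        (hs : t + 1 ≤ s) : Function.update g t v s = 0 := by
      rw [Function.update_of_ne (by omega)]
      exact hg s (by omega)
    cases hβ : β (x, t) with
    | false =>
      obtain ⟨g, hg0, hg, hgη⟩ := ih x
      refine ⟨Function.update g t 0, hvanish hg0 0,
        IsFailureCert.update (by simpa [disp] using hg) fun _ => hβ, ?_⟩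
      rw [numSteps_update, if_pos rfl]
      exact hgη.trans (hmono t x)
    | true =>
      obtain ⟨y, hyx, hyη⟩ := hgrow t x hβ
      obtain ⟨v, hv, rfl⟩ := exists_disp_eq hyx
      obtain ⟨g, hg0, hg, hgη⟩ := ih (x - disp v)
      refine ⟨Function.update g t v, hvanish hg0 v, hg.update fun h => absurd h hv, ?_⟩
      rw [numSteps_update, if_neg hv]
      omega

lemma IsSlowSurface.le_succ {Ω : Type*} {b : ℤ × ℕ → Ω → Bool} {η : ℕ → Ω → ℤ → ℕ}
    (hη : IsSlowSurface b η) (ω : Ω) (t : ℕ) (x : ℤ) : η t ω x ≤ η (t + 1) ω x := by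
  rw [hη.2]
  split_ifs <;> omega

lemma IsSlowSurface.exists_add_one_le {Ω : Type*} {b : ℤ × ℕ → Ω → Bool}
    {η : ℕ → Ω → ℤ → ℕ} (hη : IsSlowSurface b η) (ω : Ω) (t : ℕ) (x : ℤ)
    (hb : b (x, t) ω = true) : ∃ y, |y - x| ≤ 1 ∧ η t ω y + 1 ≤ η (t + 1) ω x := by
  rw [hη.2]
  by_cases hmin : ∀ y : ℤ, |y - x| ≤ 1 → η t ω x ≤ η t ω y
  · exact ⟨x, by simp, by rw [if_pos ⟨hb, hmin⟩]⟩
  · push Not at hmin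
    obtain ⟨y, hyx, hy⟩ := hmin
    exact ⟨y, hyx, by rw [if_neg fun h => (h.2 y hyx).not_gt hy]; omega⟩

def padZero {t : ℕ} (g : Fin t → Fin 4) : ℕ → Fin 4 := fun s => if h : s < t then g ⟨s, h⟩ else 0

lemma prod_range_ite_eq_pow_mul_pow (g : ℕ → Fin 4) (t : ℕ) (a c : ℝ) :
    ∏ s ∈ range t, (if g s = 0 then a else c)
      = a ^ #{s ∈ range t | g s = 0} * c ^ numSteps g t := by
  rw [prod_ite, prod_const, prod_const]
  rfl

lemma le_pow_mul_prod_weight {t m : ℕ} (g : Fin t → Fin 4) (hm : numSteps (padZero g) t ≤ m)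
    {q θ : ℝ} (hq : 0 ≤ q) (hθ : 1 ≤ θ) :
    q ^ #{s ∈ range t | padZero g s = 0}
      ≤ θ ^ m * ∏ s, (if g s = 0 then q else θ⁻¹) := by
  have hprod : ∏ s, (if g s = 0 then q else θ⁻¹)
      = ∏ s ∈ range t, (if padZero g s = 0 then q else θ⁻¹) := by
    rw [← Fin.prod_univ_eq_prod_range]
    simp [padZero]
  have hθm : 1 ≤ θ ^ m * θ⁻¹ ^ numSteps (padZero g) t :=
    calc (1 : ℝ) = θ ^ numSteps (padZero g) t * θ⁻¹ ^ numSteps (padZero g) t := by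
          rw [← mul_pow, mul_inv_cancel₀ (by positivity), one_pow]
      _ ≤ θ ^ m * θ⁻¹ ^ numSteps (padZero g) t := by gcongr
  rw [hprod, prod_range_ite_eq_pow_mul_pow]
  calc q ^ #{s ∈ range t | padZero g s = 0}
      ≤ (θ ^ m * θ⁻¹ ^ numSteps (padZero g) t) * q ^ #{s ∈ range t | padZero g s = 0} :=
        le_mul_of_one_le_left (pow_nonneg hq _) hθm
    _ = _ := by ring

section Probability

variable {Ω : Type*} [MeasureSpace Ω] [IsProbabilityMeasure (ℙ : Measure Ω)] {p' : ℝ} {r : ℕ}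
  {b : ℤ × ℕ → Ω → Bool}

lemma AdmissibleField.measure_eq_false (hb : AdmissibleField p' r b) (hp0 : 0 ≤ p')
    (i : ℤ × ℕ) : ℙ {ω | b i ω = false} = ENNReal.ofReal (1 - p') := by
  have hcompl : {ω | b i ω = false} = {ω | b i ω = true}ᶜ := by ext; simp
  have hmeas : MeasurableSet {ω | b i ω = true} := hb.1 i (measurableSet_singleton true)
  rw [hcompl, prob_compl_eq_one_sub hmeas, hb.2.1 i,
    ← ENNReal.ofReal_one, ← ENNReal.ofReal_sub _ hp0]

lemma AdmissibleField.measure_forall_eq_false (hb : AdmissibleField p' r b) (hp0 : 0 ≤ p')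
    (I : Finset (ℤ × ℕ)) (hI : Set.InjOn Prod.snd (I : Set (ℤ × ℕ))) :
    ℙ {ω | ∀ i ∈ I, b i ω = false} = ENNReal.ofReal (1 - p') ^ #I := by
  have hind := hb.2.2 I fun i hi j hj hij => Or.inl fun h => hij (hI hi hj h)
  have hinter : {ω | ∀ i ∈ I, b i ω = false} = ⋂ i : I, b i ⁻¹' {false} := by
    ext; simp
  rw [hinter, hind.meas_iInter fun i => ⟨{false}, trivial, rfl⟩]
  simp_rw [Set.preimage, Set.mem_singleton_iff, hb.measure_eq_false hp0]
  simp

lemma AdmissibleField.measure_isFailureCert_le (hb : AdmissibleField p' r b) (hp0 : 0 ≤ p')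
    (hp1 : p' ≤ 1) (x : ℤ) (t : ℕ) (g : ℕ → Fin 4) :
    ℙ {ω | IsFailureCert (b · ω) x t g}
      ≤ ENNReal.ofReal ((1 - p') ^ #{s ∈ range t | g s = 0}) := by
  set I := {s ∈ range t | g s = 0}.image fun s => (backPos g x t s, s)
  have hcard : #I = #{s ∈ range t | g s = 0} :=
    card_image_of_injective _ fun s s' h => congrArg Prod.snd h
  have hsub : {ω | IsFailureCert (b · ω) x t g} ⊆ {ω | ∀ i ∈ I, b i ω = false} := by
    intro ω hω i hi
    obtain ⟨s, hs, rfl⟩ := mem_image.mp hi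
    obtain ⟨hs, hs0⟩ := mem_filter.mp hs
    exact hω s (Finset.mem_range.mp hs) hs0
  have hinj : Set.InjOn Prod.snd (I : Set (ℤ × ℕ)) := by
    rintro _ hi _ hj (h : _ = _)
    obtain ⟨s, -, rfl⟩ := mem_image.mp hi
    obtain ⟨s', -, rfl⟩ := mem_image.mp hj
    rw [show s = s' from h]
  calc ℙ {ω | IsFailureCert (b · ω) x t g} ≤ ℙ {ω | ∀ i ∈ I, b i ω = false} := measure_mono hsub
    _ = _ := by
      rw [hb.measure_forall_eq_false hp0 I hinj, hcard, ENNReal.ofReal_pow (by linarith)]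

lemma AdmissibleField.measure_slowSurface_le_pow_mul_pow (hb : AdmissibleField p' r b)
    (hp0 : 0 ≤ p') (hp1 : p' ≤ 1) {η : ℕ → Ω → ℤ → ℕ} (hη : IsSlowSurface b η) (x : ℤ)
    (t m : ℕ) {θ : ℝ} (hθ : 1 ≤ θ) :
    ℙ {ω | η t ω x ≤ m} ≤ ENNReal.ofReal (θ ^ m * (1 - p' + 3 * θ⁻¹) ^ t) := by
  set w : Fin 4 → ℝ := fun j => if j = 0 then 1 - p' else θ⁻¹
  set S : Finset (Fin t → Fin 4) := {g | numSteps (padZero g) t ≤ m}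
  have hcover : {ω | η t ω x ≤ m} ⊆ ⋃ g ∈ S, {ω | IsFailureCert (b · ω) x t (padZero g)} := by
    intro ω hω
    obtain ⟨g, hg0, hg, hgη⟩ := exists_isFailureCert_numSteps_le (β := (b · ω)) (hη.le_succ ω)
      (hη.exists_add_one_le ω) t x
    have hpad : padZero (fun s : Fin t => g s) = g := by
      ext s
      by_cases hs : s < t
      · simp [padZero, hs]
      · simp [padZero, hs, hg0 s (not_lt.mp hs)]
    refine Set.mem_biUnion (x := fun s : Fin t => g s) ?_ ?_
    · simpa [S, hpad] using hgη.trans hω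
    · simpa [hpad] using hg
  have hterm : ∀ g ∈ S, ℙ {ω | IsFailureCert (b · ω) x t (padZero g)}
      ≤ ENNReal.ofReal (θ ^ m * ∏ s, w (g s)) := fun g hg =>
    (hb.measure_isFailureCert_le hp0 hp1 x t _).trans <| ENNReal.ofReal_le_ofReal <|
      le_pow_mul_prod_weight g (mem_filter.mp hg).2 (by linarith) hθ
  have hw : ∑ j, w j = 1 - p' + 3 * θ⁻¹ := by
    simp only [Fin.isValue, Fin.sum_univ_four, ↓reduceIte, one_ne_zero, Fin.reduceEq, w]
    ring
  have hw0 : ∀ j, 0 ≤ w j := fun j => by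
    simp only [w]; split_ifs <;> [linarith; positivity]
  calc ℙ {ω | η t ω x ≤ m}
      ≤ ∑ g ∈ S, ℙ {ω | IsFailureCert (b · ω) x t (padZero g)} :=
        (measure_mono hcover).trans (measure_biUnion_finset_le S _)
    _ ≤ ∑ g ∈ S, ENNReal.ofReal (θ ^ m * ∏ s, w (g s)) := sum_le_sum hterm
    _ ≤ ∑ g : Fin t → Fin 4, ENNReal.ofReal (θ ^ m * ∏ s, w (g s)) :=
        sum_le_sum_of_subset (subset_univ S)
    _ = ENNReal.ofReal (θ ^ m * (1 - p' + 3 * θ⁻¹) ^ t) := by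
        rw [← ENNReal.ofReal_sum_of_nonneg fun g _ =>
          mul_nonneg (by positivity) (prod_nonneg fun s _ => hw0 _), ← mul_sum,
          ← Fintype.sum_pow, hw]

lemma AdmissibleField.measure_slowSurface_le_exp (hb : AdmissibleField p' r b) (hp0 : 0 ≤ p')
    (hp1 : p' ≤ 1) {η : ℕ → Ω → ℤ → ℕ} (hη : IsSlowSurface b η) (x : ℤ) (t : ℕ) {α θ c : ℝ}
    (hα : 0 ≤ α) (hθ : 1 ≤ θ)
    (hc : θ ^ α * (1 - p' + 3 * θ⁻¹) ≤ Real.exp (-c)) :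
    ℙ {ω | (η t ω x : ℝ) ≤ α * t} ≤ ENNReal.ofReal (Real.exp (-c * t)) := by
  have hαt : 0 ≤ α * t := by positivity
  have hevent : {ω | (η t ω x : ℝ) ≤ α * t} = {ω | η t ω x ≤ ⌊α * t⌋₊} := by
    ext ω
    exact (Nat.le_floor_iff hαt).symm
  have hθm : θ ^ ⌊α * t⌋₊ ≤ (θ ^ α) ^ t := by
    rw [← Real.rpow_natCast, ← Real.rpow_natCast, ← Real.rpow_mul (by linarith)]
    exact Real.rpow_le_rpow_of_exponent_le hθ (Nat.floor_le hαt)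
  rw [hevent]
  refine (hb.measure_slowSurface_le_pow_mul_pow hp0 hp1 hη x t _ hθ).trans
    (ENNReal.ofReal_le_ofReal ?_)
  calc θ ^ ⌊α * t⌋₊ * (1 - p' + 3 * θ⁻¹) ^ t
      ≤ (θ ^ α) ^ t * (1 - p' + 3 * θ⁻¹) ^ t := by gcongr
    _ = (θ ^ α * (1 - p' + 3 * θ⁻¹)) ^ t := (mul_pow _ _ _).symm
    _ ≤ Real.exp (-c) ^ t := by gcongr
    _ = Real.exp (-c * t) := by rw [← Real.exp_nat_mul]; ring_nf

end Probability

lemma exists_pos_rpow_mul_lt_one {θ ρ : ℝ} (hθ : 0 < θ) (hρ : ρ < 1) :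
    ∃ α : ℝ, 0 < α ∧ θ ^ α * ρ < 1 := by
  have hcont : Tendsto (fun α : ℝ => θ ^ α * ρ) (𝓝[>] 0) (𝓝 ρ) := by
    have := ((Real.continuousAt_const_rpow (b := 0) hθ.ne').mul_const ρ).tendsto
    rw [Real.rpow_zero, one_mul] at this
    exact this.mono_left nhdsWithin_le_nhds
  obtain ⟨α, hα, hα0⟩ := ((hcont.eventually_lt_const hρ).and self_mem_nhdsWithin).exists
  exact ⟨α, hα0, hα⟩

lemma rpow_inv_rpow_one_sub_mul_inv {a ε : ℝ} (ha : 0 < a) (hε : ε ≠ 0) :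
    (a ^ ε⁻¹) ^ (1 - ε) * (a ^ ε⁻¹)⁻¹ = a⁻¹ := by
  rw [← Real.rpow_neg_one (a ^ ε⁻¹), ← Real.rpow_add (by positivity), ← Real.rpow_mul ha.le,
    ← Real.rpow_neg_one a]
  congr 1
  field_simp
  ring

lemma exists_pos_rpow_mul_le_exp {p' : ℝ} (hp0 : 0 < p') (hp1 : p' ≤ 1) :
    ∃ α : ℝ, 0 < α ∧ ∃ c : ℝ, 0 < c ∧
      (6 / p') ^ α * (1 - p' + 3 * (6 / p')⁻¹) ≤ Real.exp (-c) := by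
  obtain ⟨α, hα, hlt⟩ :=
    exists_pos_rpow_mul_lt_one (θ := 6 / p') (by positivity) (show 1 - p' / 2 < 1 by linarith)
  have hρ : 0 < (6 / p') ^ α * (1 - p' / 2) := mul_pos (by positivity) (by linarith)
  refine ⟨α, hα, -Real.log ((6 / p') ^ α * (1 - p' / 2)), neg_pos.mpr (Real.log_neg hρ hlt), ?_⟩
  rw [neg_neg, Real.exp_log hρ]
  apply le_of_eq
  congr 1
  field_simp
  ring

lemma exists_rpow_one_sub_mul_le_exp {ε : ℝ} (hε : 0 < ε) (hε1 : ε ≤ 1) :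
    ∃ θ : ℝ, 1 ≤ θ ∧ ∃ p'₀ : ℝ, 0 ≤ p'₀ ∧ p'₀ < 1 ∧ ∃ c : ℝ, 0 < c ∧
      ∀ p' : ℝ, p'₀ ≤ p' → θ ^ (1 - ε) * (1 - p' + 3 * θ⁻¹) ≤ Real.exp (-c) := by
  set θ : ℝ := 6 ^ ε⁻¹
  have hθ : 1 ≤ θ := Real.one_le_rpow (by norm_num) (by positivity)
  have hθα : 1 ≤ θ ^ (1 - ε) := Real.one_le_rpow hθ (by linarith)
  have hθinv : θ ^ (1 - ε) * θ⁻¹ = 6⁻¹ := rpow_inv_rpow_one_sub_mul_inv (by norm_num) hε.ne'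
  refine ⟨θ, hθ, 1 - (θ ^ (1 - ε))⁻¹ / 4, ?_, ?_, Real.log (4 / 3), Real.log_pos (by norm_num),
    fun p' hp' => ?_⟩
  · have := inv_le_one_of_one_le₀ hθα
    linarith
  · have := inv_pos.mpr (zero_lt_one.trans_le hθα)
    linarith
  have hfail : θ ^ (1 - ε) * (1 - p') ≤ 1 / 4 :=
    calc θ ^ (1 - ε) * (1 - p') ≤ θ ^ (1 - ε) * ((θ ^ (1 - ε))⁻¹ / 4) := by gcongr; linarith
      _ = 1 / 4 := by field_simp
  rw [Real.exp_neg, Real.exp_log (by norm_num)]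
  calc θ ^ (1 - ε) * (1 - p' + 3 * θ⁻¹) = θ ^ (1 - ε) * (1 - p') + 3 * (θ ^ (1 - ε) * θ⁻¹) := by
        ring
    _ ≤ (4 / 3)⁻¹ := by rw [hθinv]; linarith

theorem stmt14 (r : ℕ) :
    (∀ p' : ℝ, 0 < p' → p' ≤ 1 → ∃ α : ℝ, 0 < α ∧ ∃ cc : ℝ, 0 < cc ∧
      ∀ (Ω : Type) [MeasureSpace Ω] [IsProbabilityMeasure (ℙ : Measure Ω)]
        (b : ℤ × ℕ → Ω → Bool), AdmissibleField p' r b →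
        ∀ η : ℕ → Ω → ℤ → ℕ, IsSlowSurface b η →
        ∀ x : ℤ, ∀ t : ℕ,
          ℙ {ω | (η t ω x : ℝ) ≤ α * t} ≤ ENNReal.ofReal (Real.exp (-cc * t))) ∧
    (∀ ε : ℝ, 0 < ε → ∃ p'₀ : ℝ, p'₀ < 1 ∧ ∃ cc : ℝ, 0 < cc ∧
      ∀ p' : ℝ, p'₀ ≤ p' → p' ≤ 1 →
      ∀ (Ω : Type) [MeasureSpace Ω] [IsProbabilityMeasure (ℙ : Measure Ω)]
        (b : ℤ × ℕ → Ω → Bool), AdmissibleField p' r b →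
        ∀ η : ℕ → Ω → ℤ → ℕ, IsSlowSurface b η →
        ∀ x : ℤ, ∀ t : ℕ,
          ℙ {ω | (η t ω x : ℝ) ≤ (1 - ε) * t} ≤ ENNReal.ofReal (Real.exp (-cc * t))) := by
  refine ⟨fun p' hp0 hp1 => ?_, fun ε hε => ?_⟩
  · obtain ⟨α, hα, c, hc, hbound⟩ := exists_pos_rpow_mul_le_exp hp0 hp1
    have hθ : 1 ≤ 6 / p' := by rw [le_div_iff₀ hp0]; linarith
    exact ⟨α, hα, c, hc, fun Ω _ _ b hb η hη x t =>
      hb.measure_slowSurface_le_exp hp0.le hp1 hη x t hα.le hθ hbound⟩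
  · obtain ⟨θ, hθ, p'₀, hp'₀, hp'₀1, c, hc, hbound⟩ :=
      exists_rpow_one_sub_mul_le_exp (lt_min hε one_pos) (min_le_right ε 1)
    refine ⟨p'₀, hp'₀1, c, hc, fun p' hp' hp1 Ω _ _ b hb η hη x t => ?_⟩
    have hevent : {ω | (η t ω x : ℝ) ≤ (1 - ε) * t} ⊆ {ω | (η t ω x : ℝ) ≤ (1 - min ε 1) * t} :=
      Set.ofPred_subset_ofPred.mpr fun ω hω => hω.trans (by gcongr; exact min_le_left ε 1)
    exact (measure_mono hevent).trans (hb.measure_slowSurface_le_exp (hp'₀.trans hp') hp1 hη x t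
      (sub_nonneg.mpr (min_le_right ε 1)) hθ (hbound p' hp'))

end
end

section
/- Consider the fast growth surface: heights η'_t : ℤ → ℕ with η'₀ ≡ 0 and η'_{t+1}(x) = η'_t(x) + 1 if b(x, t) = 1 or η'_t(y) > η'_t(x) for some y with |y − x| ≤ 1, and η'_{t+1}(x) = η'_t(x) otherwise. Then for every ε > 0 and r ∈ ℕ there exist p'₀ > 0 and c > 0 such that whenever p' ≤ p'₀, for every admissible field b, every x ∈ ℤ and every t, P(η'_t(x) ≥ εt) ≤ e^{−ct}. -/
open MeasureTheory ProbabilityTheory Filter Topology Set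
open scoped Pointwise ENNReal

noncomputable section

/-!
Unwinding the recursion, `η'_t(x)` is at most the number of sites with `b = 1` along some
nearest-neighbour space-time path ending at `(x, t)`. Such a path reads each time once, so its
variables are independent. A union bound over the `3^t` paths and the `(t choose k) ≤ 2^t` sets
of `k` hit times gives `P(η'_t(x) ≥ k) ≤ 6^t p'^k`, which is at most `2^{-t}` once `k ≥ εt` and
`p' ≤ 12^{-⌈1/ε⌉}`.
-/

open Finset

section FastSurface

variable {Ω : Type*} (b : ℤ × ℕ → Ω → Bool)

/-- `g ∈ nnPaths t x` lists the sites `g s` visited at times `s + 1`, `s < t`, by a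
nearest-neighbour path ending at `x` at time `t`; `b (g s, s)` is the variable the fast surface
reads at that site. -/
def nnPaths : (t : ℕ) → ℤ → Finset (Fin t → ℤ)
  | 0, _ => {Fin.elim0}
  | t + 1, x =>
    (Finset.Icc (x - 1) (x + 1)).biUnion fun y => (nnPaths t y).image fun g => Fin.snoc g x

lemma card_nnPaths_le : ∀ (t : ℕ) (x : ℤ), #(nnPaths t x) ≤ 3 ^ t
  | 0, _ => by simp [nnPaths]
  | t + 1, x => calc
      #(nnPaths (t + 1) x) ≤ ∑ y ∈ Finset.Icc (x - 1) (x + 1), #(nnPaths t y) :=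
        card_biUnion_le.trans (sum_le_sum fun y _ => card_image_le)
      _ ≤ ∑ _y ∈ Finset.Icc (x - 1) (x + 1), 3 ^ t := sum_le_sum fun y _ => card_nnPaths_le t y
      _ = 3 ^ (t + 1) := by
        rw [sum_const, Int.card_Icc, show x + 1 + 1 - (x - 1) = 3 by ring, smul_eq_mul, pow_succ,
          mul_comm]
        rfl

def pathHits (ω : Ω) {t : ℕ} (g : Fin t → ℤ) : ℕ := #{s : Fin t | b (g s, s) ω = true}

lemma pathHits_snoc (ω : Ω) {t : ℕ} (g : Fin t → ℤ) (x : ℤ) :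
    pathHits b ω (Fin.snoc g x : Fin (t + 1) → ℤ) =
      pathHits b ω g + if b (x, t) ω = true then 1 else 0 := by
  simp only [pathHits, card_filter, Fin.sum_univ_castSucc, Fin.snoc_castSucc, Fin.snoc_last,
    Fin.val_castSucc, Fin.val_last]

lemma pathHits_le_pathHits_snoc (ω : Ω) {t : ℕ} (g : Fin t → ℤ) (x : ℤ) :
    pathHits b ω g ≤ pathHits b ω (Fin.snoc g x : Fin (t + 1) → ℤ) := by
  rw [pathHits_snoc]
  exact Nat.le_add_right _ _

variable {b}

lemma IsFastSurface.exists_mem_nnPaths_le_pathHits {η : ℕ → Ω → ℤ → ℕ}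
    (hη : IsFastSurface b η) (ω : Ω) :
    ∀ (t : ℕ) (x : ℤ), ∃ g ∈ nnPaths t x, η t ω x ≤ pathHits b ω g
  | 0, x => ⟨Fin.elim0, by simp [nnPaths], by simp [hη.1 ω x]⟩
  | t + 1, x => by
    have extend : ∀ y ∈ Finset.Icc (x - 1) (x + 1), ∀ g ∈ nnPaths t y,
        (Fin.snoc g x : Fin (t + 1) → ℤ) ∈ nnPaths (t + 1) x := fun y hy g hg =>
      Finset.mem_biUnion.mpr ⟨y, hy, Finset.mem_image_of_mem _ hg⟩
    have hx : x ∈ Finset.Icc (x - 1) (x + 1) := Finset.mem_Icc.mpr ⟨by omega, by omega⟩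
    obtain ⟨g, hg, hηg⟩ := hη.exists_mem_nnPaths_le_pathHits ω t x
    rw [hη.2 ω t x]
    split_ifs with hgrow
    · obtain hbx | ⟨y, hyx, hlt⟩ := hgrow
      · refine ⟨_, extend x hx g hg, ?_⟩
        rw [pathHits_snoc, if_pos hbx]
        omega
      · obtain ⟨g', hg', hηg'⟩ := hη.exists_mem_nnPaths_le_pathHits ω t y
        have hy : y ∈ Finset.Icc (x - 1) (x + 1) :=
          Finset.mem_Icc.mpr (by rw [abs_le] at hyx; omega)
        exact ⟨_, extend y hy g' hg', by
          have := pathHits_le_pathHits_snoc b ω g' x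
          omega⟩
    · exact ⟨_, extend x hx g hg, hηg.trans (pathHits_le_pathHits_snoc b ω g x)⟩

variable [MeasureSpace Ω] {p' : ℝ} {r : ℕ}

lemma AdmissibleField.measure_iInter_eq_pow (hb : AdmissibleField p' r b) (I : Finset (ℤ × ℕ))
    (hI : Set.InjOn Prod.snd (I : Set (ℤ × ℕ))) :
    ℙ (⋂ i ∈ I, {ω | b i ω = true}) = ENNReal.ofReal p' ^ #I := by
  have hind := hb.2.2 I fun i hi j hj hij => Or.inl fun h => hij (hI hi hj h)
  have hprod := hind.measure_inter_preimage_eq_mul univ (sets := fun _ => {true})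
    fun _ _ => MeasurableSpace.measurableSet_top
  simp only [Set.preimage, Set.mem_singleton_iff, hb.2.1,
    prod_const, card_univ, Fintype.card_coe] at hprod
  rw [← hprod]
  congr 1
  ext ω
  simp

lemma AdmissibleField.measure_le_pathHits_le (hb : AdmissibleField p' r b) {t : ℕ}
    (g : Fin t → ℤ) (k : ℕ) :
    ℙ {ω | k ≤ pathHits b ω g} ≤ t.choose k * ENNReal.ofReal p' ^ k := by
  have hcover : {ω | k ≤ pathHits b ω g} ⊆
      ⋃ S ∈ powersetCard k (univ : Finset (Fin t)), ⋂ s ∈ S, {ω | b (g s, s) ω = true} := by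
    intro ω hω
    obtain ⟨S, hS, hSk⟩ := exists_subset_card_eq (show k ≤ pathHits b ω g from hω)
    simp only [Set.mem_iUnion, Set.mem_iInter, mem_powersetCard]
    exact ⟨S, ⟨subset_univ S, hSk⟩, fun s hs => (mem_filter.mp (hS hs)).2⟩
  have hevent : ∀ S ∈ powersetCard k (univ : Finset (Fin t)),
      ℙ (⋂ s ∈ S, {ω | b (g s, s) ω = true}) = ENNReal.ofReal p' ^ k := by
    intro S hS
    have hinj : Set.InjOn (fun s : Fin t => (g s, (s : ℕ))) S := fun s _ s' _ h =>
      Fin.val_injective (congrArg Prod.snd h)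
    rw [← (mem_powersetCard.mp hS).2, ← card_image_of_injOn hinj,
      ← hb.measure_iInter_eq_pow _ ?_, set_biInter_finset_image]
    rintro _ hi _ hj h
    obtain ⟨s, -, rfl⟩ := mem_image.mp hi
    obtain ⟨s', -, rfl⟩ := mem_image.mp hj
    rw [Fin.val_injective h]
  calc ℙ {ω | k ≤ pathHits b ω g}
      ≤ ∑ S ∈ powersetCard k (univ : Finset (Fin t)), ℙ (⋂ s ∈ S, {ω | b (g s, s) ω = true}) :=
        (measure_mono hcover).trans (measure_biUnion_finset_le _ _)
    _ = t.choose k * ENNReal.ofReal p' ^ k := by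
        rw [sum_congr rfl hevent, sum_const, card_powersetCard, card_univ, Fintype.card_fin,
          nsmul_eq_mul]

lemma IsFastSurface.measure_le_height_le (hb : AdmissibleField p' r b) {η : ℕ → Ω → ℤ → ℕ}
    (hη : IsFastSurface b η) (x : ℤ) (t k : ℕ) :
    ℙ {ω | k ≤ η t ω x} ≤ 6 ^ t * ENNReal.ofReal p' ^ k := by
  have hcover : {ω | k ≤ η t ω x} ⊆ ⋃ g ∈ nnPaths t x, {ω | k ≤ pathHits b ω g} := by
    intro ω hω
    obtain ⟨g, hg, hηg⟩ := hη.exists_mem_nnPaths_le_pathHits ω t x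
    exact Set.mem_biUnion hg (le_trans hω hηg)
  calc ℙ {ω | k ≤ η t ω x}
      ≤ ∑ g ∈ nnPaths t x, ℙ {ω | k ≤ pathHits b ω g} :=
        (measure_mono hcover).trans (measure_biUnion_finset_le _ _)
    _ ≤ ∑ _g ∈ nnPaths t x, (2 ^ t : ℝ≥0∞) * ENNReal.ofReal p' ^ k := by
        refine sum_le_sum fun g _ => (hb.measure_le_pathHits_le g k).trans ?_
        gcongr
        exact_mod_cast Nat.choose_le_two_pow t k
    _ ≤ 3 ^ t * (2 ^ t * ENNReal.ofReal p' ^ k) := by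
        rw [sum_const, nsmul_eq_mul]
        gcongr
        exact_mod_cast card_nnPaths_le t x
    _ = 6 ^ t * ENNReal.ofReal p' ^ k := by rw [← mul_assoc, ← mul_pow]; norm_num

end FastSurface

lemma le_ceil_inv_mul_ceil_mul {ε : ℝ} (hε : 0 < ε) (t : ℕ) :
    t ≤ ⌈ε⁻¹⌉₊ * ⌈ε * t⌉₊ := by
  have h : (t : ℝ) ≤ ⌈ε⁻¹⌉₊ * ⌈ε * t⌉₊ := calc
    (t : ℝ) = ε⁻¹ * (ε * t) := by field_simp
    _ ≤ ⌈ε⁻¹⌉₊ * ⌈ε * t⌉₊ := by gcongr <;> exact Nat.le_ceil _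
  exact_mod_cast h

lemma six_pow_mul_pow_le_exp {p : ℝ} {m k t : ℕ} (hp : 0 ≤ p) (hpm : p ≤ (1 / 12) ^ m)
    (htk : t ≤ m * k) : 6 ^ t * p ^ k ≤ Real.exp (-Real.log 2 * t) := calc
  6 ^ t * p ^ k ≤ 6 ^ t * (1 / 12 : ℝ) ^ t := by
    gcongr
    calc p ^ k ≤ ((1 / 12 : ℝ) ^ m) ^ k := by gcongr
      _ = (1 / 12) ^ (m * k) := (pow_mul _ _ _).symm
      _ ≤ (1 / 12) ^ t := pow_le_pow_of_le_one (by norm_num) (by norm_num) htk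
  _ = Real.exp (-Real.log 2 * t) := by
    rw [← mul_pow, mul_comm (-Real.log 2), Real.exp_nat_mul, Real.exp_neg, Real.exp_log two_pos]
    norm_num

theorem stmt15 (r : ℕ) (ε : ℝ) (hε : 0 < ε) :
    ∃ p'₀ : ℝ, 0 < p'₀ ∧ ∃ cc : ℝ, 0 < cc ∧
      ∀ p' : ℝ, 0 < p' → p' ≤ p'₀ →
      ∀ (Ω : Type) [MeasureSpace Ω] [IsProbabilityMeasure (ℙ : Measure Ω)]
        (b : ℤ × ℕ → Ω → Bool), AdmissibleField p' r b →
        ∀ η : ℕ → Ω → ℤ → ℕ, IsFastSurface b η →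
        ∀ x : ℤ, ∀ t : ℕ,
          ℙ {ω | ε * t ≤ (η t ω x : ℝ)} ≤ ENNReal.ofReal (Real.exp (-cc * t)) := by
  refine ⟨(1 / 12) ^ ⌈ε⁻¹⌉₊, by positivity, Real.log 2, Real.log_pos one_lt_two, ?_⟩
  intro p' hp' hp'₀ Ω _ _ b hb η hη x t
  calc ℙ {ω | ε * t ≤ (η t ω x : ℝ)} ≤ ℙ {ω | ⌈ε * t⌉₊ ≤ η t ω x} :=
        measure_mono fun ω hω => Nat.ceil_le.mpr hω
    _ ≤ 6 ^ t * ENNReal.ofReal p' ^ ⌈ε * t⌉₊ := hη.measure_le_height_le hb x t _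
    _ = ENNReal.ofReal (6 ^ t * p' ^ ⌈ε * t⌉₊) := by
        rw [ENNReal.ofReal_mul (by positivity), ENNReal.ofReal_pow hp'.le,
          ENNReal.ofReal_pow (by norm_num), ENNReal.ofReal_ofNat]
    _ ≤ ENNReal.ofReal (Real.exp (-Real.log 2 * t)) := ENNReal.ofReal_le_ofReal
        (six_pow_mul_pow_le_exp hp'.le hp'₀ (le_ceil_inv_mul_ceil_mul hε t))

end
end

section
/- Let ρ ≥ 1 be an integer. (i) For every integer θ with 2ρ² + 1 ≤ θ, there is no x ∈ 𝒩_ρ ∖ {0} with Λ*(x) = θ (hence all supercritical range-ρ box threshold growth CA with threshold θ ≥ 2ρ² + 1 are exactly stable). (ii) For every integer θ with 1 ≤ θ ≤ ρ, and for every θ of the form θ = ρ + 1 + i(2ρ + 1) with 0 ≤ i ≤ ρ − 1, there exists x ∈ 𝒩_ρ ∖ {0} with Λ*(x) = θ (hence these thresholds are not exactly stable). -/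
open MeasureTheory ProbabilityTheory Filter Topology Set
open scoped Pointwise ENNReal

noncomputable section

/-! A half-plane `ℓ ≥ ℓ x` through `x` contains `y` or `2x - y`, since `ℓ y + ℓ (2x - y) = 2 ℓ x`;
so it meets the box in at least `#T` points whenever `T` is a subset of the box whose point
reflection through `x` stays in the box and meets `T` only at `x`. For the lexicographic functional
`L y = (2ρ + 1) y₁ + y₂` the half-plane `L ≥ L x` meets the box exactly in the points
lexicographically above `x`; it is admissible once `x₁ > 0`. When `x` lies on the right edge of the
box or on the positive horizontal axis, this lexicographic upper set is itself such a `T`, so its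
size is `Λ*(x)`, which gives (ii). For (i), `Λ*` is invariant under the quarter turn, which moves
any `x ≠ 0` to `x₁ > 0`, `x₂ ≥ 0`, where the lexicographic upper set has at most `2ρ²` points. -/

lemma mem_boxN {ρ : ℕ} {y : ℤ × ℤ} :
    y ∈ boxN ρ ↔ -(ρ : ℤ) ≤ y.1 ∧ y.1 ≤ ρ ∧ -(ρ : ℤ) ≤ y.2 ∧ y.2 ≤ ρ := by
  simp only [boxN, Finset.mem_Icc, Prod.le_def]
  tauto

lemma card_le_of_mem_lamSet {ρ : ℕ} {x : ℤ × ℤ} {T : Finset (ℤ × ℤ)} (hT : T ⊆ boxN ρ)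
    (hrefl : ∀ y ∈ T, 2 • x - y ∈ boxN ρ) (hcap : ∀ y ∈ T, 2 • x - y ∈ T → y = x)
    {n : ℕ} (hn : n ∈ lamSet ρ x) : T.card ≤ n := by
  obtain ⟨a, b, c, -, -, hx, rfl⟩ := hn
  have hsum : ∀ y : ℤ × ℤ,
      a * (2 • x - y).1 + b * (2 • x - y).2 = 2 * c - (a * y.1 + b * y.2) := by
    intro y
    simp only [Prod.fst_sub, Prod.snd_sub, two_nsmul, Prod.fst_add, Prod.snd_add]
    push_cast
    linarith
  classical
  let f : ℤ × ℤ → ℤ × ℤ := fun y => if c ≤ a * y.1 + b * y.2 then y else 2 • x - y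
  refine Finset.card_le_card_of_injOn f (fun y hy => ?_) (fun y hy z hz hyz => ?_)
  · simp only [f, Finset.coe_filter, Set.mem_ofPred_eq]
    split_ifs with h
    · exact ⟨hT hy, h⟩
    · exact ⟨hrefl y hy, by rw [hsum]; linarith⟩
  · have hxin : c ≤ a * x.1 + b * x.2 := hx.ge
    simp only [f] at hyz
    split_ifs at hyz with hy' hz'
    · exact hyz
    · obtain rfl : z = x := hcap z hz (hyz ▸ hy)
      exact absurd hxin hz'
    · obtain rfl : y = x := hcap y hy (hyz ▸ hz)
      exact absurd hxin hy'
    · exact sub_right_injective hyz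

def quarterTurn (y : ℤ × ℤ) : ℤ × ℤ := (-y.2, y.1)

lemma cutCard_quarterTurn (ρ : ℕ) (a b c : ℝ) : cutCard ρ (-b) a c = cutCard ρ a b c := by
  refine Finset.card_nbij' (fun y => (y.2, -y.1)) quarterTurn ?_ ?_
    (fun _ _ => by simp [quarterTurn]) (fun _ _ => by simp [quarterTurn])
  all_goals
    intro y hy
    simp only [Finset.coe_filter, Set.mem_ofPred_eq, mem_boxN, quarterTurn] at hy ⊢
    refine ⟨by omega, ?_⟩
    push_cast
    linarith [hy.2]

lemma lamSet_subset_quarterTurn (ρ : ℕ) (x : ℤ × ℤ) :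
    lamSet ρ x ⊆ lamSet ρ (quarterTurn x) := by
  rintro n ⟨a, b, c, hab, hc, hx, rfl⟩
  refine ⟨-b, a, c, by rwa [neg_eq_zero, and_comm], hc, ?_,
    (cutCard_quarterTurn ρ a b c).symm⟩
  simp only [quarterTurn, Int.cast_neg]
  linarith

lemma lamSet_quarterTurn (ρ : ℕ) (x : ℤ × ℤ) : lamSet ρ (quarterTurn x) = lamSet ρ x := by
  have hmono : ∀ k y, lamSet ρ y ⊆ lamSet ρ (quarterTurn^[k] y) := by
    intro k y
    induction k with
    | zero => exact subset_rfl
    | succ k ih =>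
      rw [Function.iterate_succ_apply']
      exact ih.trans (lamSet_subset_quarterTurn ρ _)
  have h4 : quarterTurn^[3] (quarterTurn x) = x := by simp [quarterTurn]
  exact (h4 ▸ hmono 3 (quarterTurn x)).antisymm (lamSet_subset_quarterTurn ρ x)

lemma lamStar_quarterTurn (ρ : ℕ) (x : ℤ × ℤ) : lamStar ρ (quarterTurn x) = lamStar ρ x := by
  rw [lamStar, lamStar, lamSet_quarterTurn]

lemma exists_lamStar_eq_of_pos_quadrant {ρ : ℕ} {x : ℤ × ℤ} (hx : x ∈ boxN ρ)
    (hx0 : x ≠ (0, 0)) :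
    ∃ y ∈ boxN ρ, 0 < y.1 ∧ 0 ≤ y.2 ∧ lamStar ρ y = lamStar ρ x := by
  obtain ⟨x₁, x₂⟩ := x
  rw [Ne, Prod.mk.injEq] at hx0
  rw [mem_boxN] at hx
  simp only at hx
  have turn : ∀ y, lamStar ρ y = lamStar ρ (quarterTurn y) :=
    fun y => (lamStar_quarterTurn ρ y).symm
  rcases (by omega : (0 < x₁ ∧ 0 ≤ x₂) ∨ (x₁ ≤ 0 ∧ 0 < x₂) ∨ (x₁ < 0 ∧ x₂ ≤ 0) ∨
      (0 ≤ x₁ ∧ x₂ < 0)) with h | h | h | h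
  · exact ⟨(x₁, x₂), mem_boxN.2 hx, h.1, h.2, rfl⟩
  · refine ⟨(x₂, -x₁), mem_boxN.2 (by simp only; omega), h.2, by simp only; omega, ?_⟩
    rw [turn]
    simp [quarterTurn]
  · refine ⟨(-x₁, -x₂), mem_boxN.2 (by simp only; omega), by simp only; omega,
      by simp only; omega, ?_⟩
    rw [turn, turn]
    simp [quarterTurn]
  · refine ⟨(-x₂, x₁), mem_boxN.2 (by simp only; omega), by simp only; omega, h.1, ?_⟩
    rw [turn, turn, turn]
    simp [quarterTurn]

def lexUpper (ρ : ℕ) (x : ℤ × ℤ) : Finset (ℤ × ℤ) :=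
  (boxN ρ).filter fun y => toLex x ≤ toLex y

lemma mem_lexUpper {ρ : ℕ} {x y : ℤ × ℤ} :
    y ∈ lexUpper ρ x ↔ y ∈ boxN ρ ∧ (x.1 < y.1 ∨ x.1 = y.1 ∧ x.2 ≤ y.2) := by
  rw [lexUpper, Finset.mem_filter, Prod.Lex.toLex_le_toLex]

lemma card_lexUpper {ρ : ℕ} {x : ℤ × ℤ} (hx : x ∈ boxN ρ) :
    ((lexUpper ρ x).card : ℤ) = (ρ - x.1) * (2 * ρ + 1) + (ρ + 1 - x.2) := by
  rw [mem_boxN] at hx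
  have hsplit : lexUpper ρ x = (Finset.Icc (x.1 + 1) ρ ×ˢ Finset.Icc (-(ρ : ℤ)) ρ) ∪
      ({x.1} ×ˢ Finset.Icc x.2 ρ) := by
    ext y
    simp only [mem_lexUpper, mem_boxN, Finset.mem_union, Finset.mem_product, Finset.mem_Icc,
      Finset.mem_singleton]
    omega
  have hdisj : Disjoint (Finset.Icc (x.1 + 1) ρ ×ˢ Finset.Icc (-(ρ : ℤ)) ρ)
      ({x.1} ×ˢ Finset.Icc x.2 ρ) := by
    simp only [Finset.disjoint_left, Finset.mem_product, Finset.mem_Icc, Finset.mem_singleton]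
    omega
  rw [hsplit, Finset.card_union_of_disjoint hdisj, Finset.card_product, Finset.card_product,
    Finset.card_singleton, Int.card_Icc, Int.card_Icc, Int.card_Icc]
  push_cast
  rw [Int.toNat_of_nonneg (by omega), Int.toNat_of_nonneg (by omega),
    Int.toNat_of_nonneg (by omega)]
  ring

def lexKey (ρ : ℕ) (y : ℤ × ℤ) : ℤ := (2 * ρ + 1) * y.1 + y.2

lemma lexKey_le_lexKey_iff {ρ : ℕ} {x y : ℤ × ℤ} (hx : x ∈ boxN ρ) (hy : y ∈ boxN ρ) :
    lexKey ρ x ≤ lexKey ρ y ↔ toLex x ≤ toLex y := by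
  rw [mem_boxN] at hx hy
  rw [lexKey, lexKey, Prod.Lex.toLex_le_toLex]
  constructor
  · intro h
    rcases lt_trichotomy x.1 y.1 with h₁ | h₁ | h₁
    · exact Or.inl h₁
    · rw [h₁] at h
      exact Or.inr ⟨h₁, by omega⟩
    · nlinarith
  · rintro (h | ⟨h₁, h₂⟩)
    · nlinarith
    · rw [h₁]; omega

lemma card_lexUpper_mem_lamSet {ρ : ℕ} {x : ℤ × ℤ} (hx : x ∈ boxN ρ) (hx₁ : 0 < x.1) :
    (lexUpper ρ x).card ∈ lamSet ρ x := by
  have hkey : 0 < lexKey ρ x := by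
    rw [mem_boxN] at hx
    rw [lexKey]
    nlinarith
  refine ⟨2 * ρ + 1, 1, lexKey ρ x, fun h => one_ne_zero h.2, by exact_mod_cast hkey,
    by simp [lexKey], ?_⟩
  rw [cutCard, lexUpper]
  congr 1
  refine Finset.filter_congr fun y hy => ?_
  rw [← lexKey_le_lexKey_iff hx hy, ← Int.cast_le (R := ℝ)]
  simp [lexKey]

lemma lamStar_le_card_lexUpper {ρ : ℕ} {x : ℤ × ℤ} (hx : x ∈ boxN ρ) (hx₁ : 0 < x.1) :
    lamStar ρ x ≤ (lexUpper ρ x).card :=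
  Nat.sInf_le (card_lexUpper_mem_lamSet hx hx₁)

lemma lamStar_eq_card_lexUpper {ρ : ℕ} {x : ℤ × ℤ} (hx : x ∈ boxN ρ) (hx₁ : 0 < x.1)
    (hx₂ : 0 ≤ x.2) (hedge : x.1 = ρ ∨ x.2 = 0) : lamStar ρ x = (lexUpper ρ x).card := by
  refine (lamStar_le_card_lexUpper hx hx₁).antisymm
    (le_csInf ⟨_, card_lexUpper_mem_lamSet hx hx₁⟩ fun n hn => ?_)
  refine card_le_of_mem_lamSet (T := lexUpper ρ x) (Finset.filter_subset _ _)
    (fun y hy => ?_) (fun y hy hy' => ?_) hn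
  · rw [mem_lexUpper, mem_boxN] at hy
    rw [mem_boxN] at hx ⊢
    simp only [Prod.fst_sub, Prod.snd_sub, two_nsmul, Prod.fst_add, Prod.snd_add]
    omega
  · rw [mem_lexUpper] at hy hy'
    simp only [Prod.fst_sub, Prod.snd_sub, two_nsmul, Prod.fst_add, Prod.snd_add] at hy'
    exact Prod.ext (by omega) (by omega)

lemma lamStar_le_two_mul_sq {ρ : ℕ} {x : ℤ × ℤ} (hx : x ∈ boxN ρ) (hx0 : x ≠ (0, 0)) :
    lamStar ρ x ≤ 2 * ρ ^ 2 := by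
  obtain ⟨y, hy, hy₁, hy₂, hyx⟩ := exists_lamStar_eq_of_pos_quadrant hx hx0
  rw [← hyx]
  refine (lamStar_le_card_lexUpper hy hy₁).trans ?_
  have hcard := card_lexUpper hy
  rw [mem_boxN] at hy
  zify
  nlinarith

theorem stmt19_general (ρ : ℕ) :
    (∀ θ : ℕ, 2 * ρ ^ 2 + 1 ≤ θ → ¬ ∃ x ∈ boxN ρ, x ≠ (0, 0) ∧ lamStar ρ x = θ) ∧
    (∀ θ : ℕ, 1 ≤ θ → θ ≤ ρ → ∃ x ∈ boxN ρ, x ≠ (0, 0) ∧ lamStar ρ x = θ) ∧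
    (∀ i : ℕ, i < ρ → ∃ x ∈ boxN ρ, x ≠ (0, 0) ∧
      lamStar ρ x = ρ + 1 + i * (2 * ρ + 1)) := by
  refine ⟨fun θ hθ ⟨x, hx, hx0, hxθ⟩ => ?_, fun θ hθ₁ hθ₂ => ?_, fun i hi => ?_⟩
  · have := lamStar_le_two_mul_sq hx hx0
    omega
  · have hx : ((ρ : ℤ), (ρ : ℤ) + 1 - θ) ∈ boxN ρ := mem_boxN.2 (by simp only; omega)
    refine ⟨_, hx, by simp only [ne_eq, Prod.mk.injEq]; omega, ?_⟩
    rw [lamStar_eq_card_lexUpper hx (by simp only; omega) (by simp only; omega) (Or.inl rfl)]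
    zify
    rw [card_lexUpper hx]
    ring
  · have hx : ((ρ : ℤ) - i, (0 : ℤ)) ∈ boxN ρ := mem_boxN.2 (by simp only; omega)
    refine ⟨_, hx, by simp only [ne_eq, Prod.mk.injEq]; omega, ?_⟩
    rw [lamStar_eq_card_lexUpper hx (by simp only; omega) le_rfl (Or.inr rfl)]
    zify
    rw [card_lexUpper hx]
    ring

theorem stmt19 (ρ : ℕ) (hρ : 1 ≤ ρ) :
    (∀ θ : ℕ, 2 * ρ ^ 2 + 1 ≤ θ → ¬ ∃ x ∈ boxN ρ, x ≠ (0, 0) ∧ lamStar ρ x = θ) ∧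
    (∀ θ : ℕ, 1 ≤ θ → θ ≤ ρ → ∃ x ∈ boxN ρ, x ≠ (0, 0) ∧ lamStar ρ x = θ) ∧
    (∀ i : ℕ, i < ρ → ∃ x ∈ boxN ρ, x ≠ (0, 0) ∧
      lamStar ρ x = ρ + 1 + i * (2 * ρ + 1)) :=
  stmt19_general ρ

end
end
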